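/- arXiv:2301.13541 — 9 statements merged into one kernel-verified Lean document; each statement's English description precedes it below -/
import Mathlib

section
/- Let A ∈ ℂ^{m×n}, let d ∈ ℝ^m and e ∈ ℝ^n have nonnegative entries, set D_in := diag(d) and D_out := diag(e), and suppose that whenever d_i = 0 the i-th row of A is zero and whenever e_j = 0 the j-th column of A is zero. For a nonnegative diagonal matrix D, let D⁻ denote the diagonal matrix whose entries are the reciprocals of the nonzero diagonal entries of D and 0 elsewhere, and let D^{−1/2} := (D⁻)^{1/2} entrywise. Then the following are equivalent: (a) I_n − N*N is PSD, where N := D_in^{−1/2}·A·D_out^{−1/2}; (b) D_in − A·D_out⁻·A* is PSD; (c) D_out − A*·D_in⁻·A is PSD; (d) for some z ∈ ℂ with |z| = 1, the block matrix [[D_in, z·A],[z̄·A*, D_out]] is PSD; (e) for every z ∈ ℂ with |z| ≤ 1, the block matrix [[D_in, z·A],[z̄·A*, D_out]] is PSD. Moreover, if d_i ≥ ∑_j |A_{ij}| for all i and e_j ≥ ∑_i |A_{ij}| for all j, then conditions (a)–(e) hold; in particular they hold when A has nonnegative real entries, d is the vector of row sums of A, and e is the vector of column sums of A. -/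
/-!
Write `D⁻` for the entrywise generalized inverse of `D_out`. The column condition gives
`A D⁻ D_out = A`, so the block matrix factors as `L · diag(D_in − |z|² A D⁻ A*, D_out) · L*` with
`L` block unitriangular: a Schur complement taken with a generalized inverse. This gives
(b) ⇔ (d) ⇔ (e). Swapping the two blocks exchanges `A` with `A*` and `d` with `e`, giving
(b) ⇔ (c), and a congruence by `D_out^{±1/2}` gives (a) ⇔ (c). Under the row and column sum
bounds the block matrix is diagonally dominant with nonnegative diagonal, hence PSD by
Gershgorin's theorem.
-/

open Matrix ComplexOrder

namespace Stmt2

variable {m n : ℕ}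

/-- The normalization `N := D_in^{−1/2} · A · D_out^{−1/2}`, where `D_in = diag d`,
`D_out = diag e` and the inverse square roots are taken entrywise (with `0⁻¹ = 0`). -/
noncomputable def Nmat (A : Matrix (Fin m) (Fin n) ℂ) (d : Fin m → ℝ) (e : Fin n → ℝ) :
    Matrix (Fin m) (Fin n) ℂ :=
  (Matrix.diagonal fun i => (Real.sqrt ((d i)⁻¹) : ℂ)) * A *
    (Matrix.diagonal fun j => (Real.sqrt ((e j)⁻¹) : ℂ))

/-- Condition (a): `I_n − N*N` is PSD. -/
noncomputable def condA (A : Matrix (Fin m) (Fin n) ℂ) (d : Fin m → ℝ) (e : Fin n → ℝ) : Prop :=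
  ((1 : Matrix (Fin n) (Fin n) ℂ) - (Nmat A d e)ᴴ * Nmat A d e).PosSemidef

/-- Condition (b): `D_in − A · D_out⁻ · A*` is PSD. -/
def condB (A : Matrix (Fin m) (Fin n) ℂ) (d : Fin m → ℝ) (e : Fin n → ℝ) : Prop :=
  ((Matrix.diagonal fun i => (d i : ℂ)) -
      A * (Matrix.diagonal fun j => ((e j)⁻¹ : ℂ)) * Aᴴ).PosSemidef

/-- Condition (c): `D_out − A* · D_in⁻ · A` is PSD. -/
def condC (A : Matrix (Fin m) (Fin n) ℂ) (d : Fin m → ℝ) (e : Fin n → ℝ) : Prop :=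
  ((Matrix.diagonal fun j => (e j : ℂ)) -
      Aᴴ * (Matrix.diagonal fun i => ((d i)⁻¹ : ℂ)) * A).PosSemidef

/-- The block matrix `[[D_in, z·A],[z̄·A*, D_out]]`. -/
def blockMat (A : Matrix (Fin m) (Fin n) ℂ) (d : Fin m → ℝ) (e : Fin n → ℝ) (z : ℂ) :
    Matrix (Fin m ⊕ Fin n) (Fin m ⊕ Fin n) ℂ :=
  Matrix.fromBlocks (Matrix.diagonal fun i => (d i : ℂ)) (z • A)
    ((starRingEnd ℂ z) • Aᴴ) (Matrix.diagonal fun j => (e j : ℂ))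

/-- Condition (d): for some unimodular `z`, the block matrix is PSD. -/
noncomputable def condD (A : Matrix (Fin m) (Fin n) ℂ) (d : Fin m → ℝ) (e : Fin n → ℝ) : Prop :=
  ∃ z : ℂ, ‖z‖ = 1 ∧ (blockMat A d e z).PosSemidef

/-- Condition (e): for every `z` with `|z| ≤ 1`, the block matrix is PSD. -/
noncomputable def condE (A : Matrix (Fin m) (Fin n) ℂ) (d : Fin m → ℝ) (e : Fin n → ℝ) : Prop :=
  ∀ z : ℂ, ‖z‖ ≤ 1 → (blockMat A d e z).PosSemidef

end Stmt2

namespace Matrix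

section Diagonal

variable {m n 𝕜 : Type*} [Fintype n] [DecidableEq n]

theorem mul_diagonal_inv_mul_diagonal {K : Type*} [Field K] {A : Matrix m n K} {c : n → K}
    (h : ∀ j, c j = 0 → ∀ i, A i j = 0) :
    A * diagonal (fun j => (c j)⁻¹) * diagonal c = A := by
  ext i j
  rw [mul_diagonal, mul_diagonal]
  by_cases hc : c j = 0
  · simp [h j hc i]
  · rw [mul_assoc, inv_mul_cancel₀ hc, mul_one]

variable [RCLike 𝕜] [Fintype m]

theorem posSemidef_diagonal_sq_sub_iff {B : Matrix m n 𝕜} {s : n → ℝ}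
    (hB : ∀ j, s j = 0 → ∀ i, B i j = 0) :
    (diagonal (fun j => ((s j ^ 2 : ℝ) : 𝕜)) - Bᴴ * B).PosSemidef ↔
      (1 - (B * diagonal fun j => ((s j : 𝕜))⁻¹)ᴴ *
        (B * diagonal fun j => ((s j : 𝕜))⁻¹)).PosSemidef := by
  set S : Matrix n n 𝕜 := diagonal fun j => (s j : 𝕜)
  set S' : Matrix n n 𝕜 := diagonal fun j => ((s j : 𝕜))⁻¹
  have hS : Sᴴ = S := by simp [S, diagonal_conjTranspose]
  have hS' : S'ᴴ = S' := by simp [S', diagonal_conjTranspose]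
  have hBS : B * S' * S = B := mul_diagonal_inv_mul_diagonal (by simpa using hB)
  have hsq : diagonal (fun j => ((s j ^ 2 : ℝ) : 𝕜)) = S * S := by simp [S, sq]
  constructor
  · intro h
    -- `1 - S' S² S'` is the coordinate projection onto `{j | s j = 0}`.
    have hP : (1 - S' * (S * S) * S').PosSemidef := by
      simp only [S, S', diagonal_mul_diagonal, ← diagonal_one, diagonal_sub,
        posSemidef_diagonal_iff]
      intro j
      by_cases hj : s j = 0 <;> simp [hj]
    convert (h.conjTranspose_mul_mul_same S').add hP using 1
    rw [hsq, conjTranspose_mul, hS']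
    simp only [Matrix.mul_sub, Matrix.sub_mul, Matrix.mul_assoc]
    abel
  · intro h
    convert h.conjTranspose_mul_mul_same S using 1
    have hBS' : S * S' * Bᴴ = Bᴴ := by
      simpa [conjTranspose_mul, hS, hS', Matrix.mul_assoc] using congrArg conjTranspose hBS
    rw [Matrix.mul_assoc] at hBS
    rw [hsq, hS, conjTranspose_mul, hS']
    simp only [Matrix.mul_sub, Matrix.sub_mul, Matrix.mul_one, Matrix.mul_assoc, hBS]
    rw [← Matrix.mul_assoc S, ← Matrix.mul_assoc (S * S'), hBS']

end Diagonal

section Blocks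

variable {m n R : Type*} [Fintype m] [Fintype n] [CommRing R] [StarRing R]

theorem posSemidef_fromBlocks_zero_iff [PartialOrder R] [StarOrderedRing R]
    {A : Matrix m m R} {D : Matrix n n R} :
    (fromBlocks A 0 0 D).PosSemidef ↔ A.PosSemidef ∧ D.PosSemidef := by
  refine ⟨fun h => ⟨h.submatrix Sum.inl, h.submatrix Sum.inr⟩, fun ⟨hA, hD⟩ => ?_⟩
  rw [posSemidef_iff_dotProduct_mulVec] at hA hD ⊢
  refine ⟨by simp [IsHermitian, fromBlocks_conjTranspose, hA.1.eq, hD.1.eq], fun x => ?_⟩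
  obtain ⟨a, b, rfl⟩ : ∃ a b, x = Sum.elim a b := ⟨_, _, (Sum.elim_comp_inl_inr x).symm⟩
  have hstar : star (Sum.elim a b) = Sum.elim (star a) (star b) := by ext (_ | _) <;> rfl
  simpa [hstar, fromBlocks_mulVec, sumElim_dotProduct_sumElim] using add_nonneg (hA.2 a) (hD.2 b)

variable [DecidableEq m] [DecidableEq n]

theorem fromBlocks_eq_mul_fromBlocks_zero_mul (A : Matrix m m R) (B : Matrix m n R)
    {D D' : Matrix n n R} (hD : D.IsHermitian) (hD' : D'.IsHermitian) (hB : B * D' * D = B) :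
    fromBlocks A B Bᴴ D = fromBlocks 1 (B * D') 0 1 * fromBlocks (A - B * D' * Bᴴ) 0 0 D *
      (fromBlocks 1 (B * D') 0 1)ᴴ := by
  have hB' : D * (D' * Bᴴ) = Bᴴ := by
    simpa [Matrix.mul_assoc, hD.eq, hD'.eq] using congrArg conjTranspose hB
  simp [fromBlocks_conjTranspose, fromBlocks_multiply, hB, hB', hD'.eq, Matrix.mul_assoc]

theorem posSemidef_fromBlocks_iff_of_mul_eq [PartialOrder R] [StarOrderedRing R]
    (A : Matrix m m R) (B : Matrix m n R) {D D' : Matrix n n R} (hD : D.PosSemidef)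
    (hD' : D'.IsHermitian) (hB : B * D' * D = B) :
    (fromBlocks A B Bᴴ D).PosSemidef ↔ (A - B * D' * Bᴴ).PosSemidef := by
  rw [fromBlocks_eq_mul_fromBlocks_zero_mul A B hD.isHermitian hD' hB, ← star_eq_conjTranspose,
    IsUnit.posSemidef_star_right_conjugate_iff (by simp), posSemidef_fromBlocks_zero_iff]
  exact and_iff_left hD

end Blocks

section Gershgorin

variable {n 𝕜 : Type*} [Fintype n] [DecidableEq n] [RCLike 𝕜]

theorem IsHermitian.hasEigenvalue_eigenvalues {A : Matrix n n 𝕜} (hA : A.IsHermitian) (i : n) :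
    Module.End.HasEigenvalue (toLin' A) (hA.eigenvalues i : 𝕜) := by
  refine Module.End.hasEigenvalue_of_hasEigenvector (x := ⇑(hA.eigenvectorBasis i)) ?_
  refine Module.End.hasEigenvector_iff.2 ⟨Module.End.mem_eigenspace_iff.2 ?_, ?_⟩
  · rw [toLin'_apply, hA.mulVec_eigenvectorBasis i, RCLike.real_smul_eq_coe_smul (K := 𝕜)]
  · simpa using hA.eigenvectorBasis.orthonormal.ne_zero i

theorem IsHermitian.posSemidef_of_sum_norm_le {A : Matrix n n 𝕜} (hA : A.IsHermitian)
    (h : ∀ k, ∑ l ∈ Finset.univ.erase k, ‖A k l‖ ≤ RCLike.re (A k k)) : A.PosSemidef := by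
  rw [hA.posSemidef_iff_eigenvalues_nonneg]
  intro i
  show 0 ≤ hA.eigenvalues i
  obtain ⟨k, hk⟩ := eigenvalue_mem_ball (hA.hasEigenvalue_eigenvalues i)
  rw [Metric.mem_closedBall, dist_eq_norm] at hk
  have hre := neg_le_of_abs_le (RCLike.abs_re_le_norm ((hA.eigenvalues i : 𝕜) - A k k))
  rw [map_sub, RCLike.ofReal_re] at hre
  linarith [h k]

end Gershgorin

end Matrix

namespace Stmt2

variable {m n : ℕ} {A : Matrix (Fin m) (Fin n) ℂ} {d : Fin m → ℝ} {e : Fin n → ℝ}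

theorem blockMat_posSemidef_iff (he : ∀ j, 0 ≤ e j) (hkerCol : ∀ j, e j = 0 → ∀ i, A i j = 0)
    (z : ℂ) :
    (blockMat A d e z).PosSemidef ↔ ((diagonal fun i => (d i : ℂ)) -
      (Complex.normSq z : ℂ) • (A * (diagonal fun j => ((e j)⁻¹ : ℂ)) * Aᴴ)).PosSemidef := by
  have hzA : z • A * (diagonal fun j => ((e j)⁻¹ : ℂ)) * diagonal (fun j => (e j : ℂ)) = z • A :=
    mul_diagonal_inv_mul_diagonal fun j hj i => by
      simp [hkerCol j (Complex.ofReal_eq_zero.1 hj) i]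
  rw [blockMat, ← Complex.star_def, ← conjTranspose_smul,
    posSemidef_fromBlocks_iff_of_mul_eq _ _ (by simpa using he) ?_ hzA]
  · rw [conjTranspose_smul, smul_mul, smul_mul, Matrix.mul_smul, smul_smul, Complex.star_def,
      Complex.mul_conj]
  · simp [IsHermitian, diagonal_conjTranspose, ← Complex.ofReal_inv]

theorem condB_iff_blockMat_posSemidef (he : ∀ j, 0 ≤ e j)
    (hkerCol : ∀ j, e j = 0 → ∀ i, A i j = 0) {z : ℂ} (hz : ‖z‖ = 1) :
    condB A d e ↔ (blockMat A d e z).PosSemidef := by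
  rw [blockMat_posSemidef_iff he hkerCol, Complex.normSq_eq_norm_sq, hz]
  simp [condB]

theorem condE_of_condB (he : ∀ j, 0 ≤ e j) (hkerCol : ∀ j, e j = 0 → ∀ i, A i j = 0)
    (hB : condB A d e) : condE A d e := by
  intro z hz
  rw [blockMat_posSemidef_iff he hkerCol]
  have hM : (A * (diagonal fun j => ((e j)⁻¹ : ℂ)) * Aᴴ).PosSemidef :=
    PosSemidef.mul_mul_conjTranspose_same (by simpa using fun j => inv_nonneg.2 (he j)) A
  have hz' : (0 : ℂ) ≤ ((1 - Complex.normSq z : ℝ) : ℂ) := by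
    rw [Complex.zero_le_real, sub_nonneg, Complex.normSq_eq_norm_sq]
    exact pow_le_one₀ (norm_nonneg z) hz
  convert hB.add (hM.smul hz') using 1
  push_cast
  rw [sub_smul, one_smul]
  abel

theorem blockMat_conjTranspose (z : ℂ) :
    blockMat Aᴴ e d (starRingEnd ℂ z) =
      (blockMat A d e z).submatrix (Equiv.sumComm _ _) (Equiv.sumComm _ _) := by
  simp [blockMat]

theorem condB_iff_condC (hd : ∀ i, 0 ≤ d i) (he : ∀ j, 0 ≤ e j)
    (hkerRow : ∀ i, d i = 0 → ∀ j, A i j = 0) (hkerCol : ∀ j, e j = 0 → ∀ i, A i j = 0) :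
    condB A d e ↔ condC A d e := by
  have hC : condC A d e ↔ condB Aᴴ e d := by simp [condB, condC]
  have hswap := blockMat_conjTranspose (A := A) (d := d) (e := e) 1
  rw [map_one] at hswap
  rw [hC, condB_iff_blockMat_posSemidef he hkerCol (norm_one (α := ℂ)),
    condB_iff_blockMat_posSemidef hd (fun i hi j => by simp [hkerRow i hi j])
      (norm_one (α := ℂ)), hswap, posSemidef_submatrix_equiv]

theorem condA_iff_condC (hd : ∀ i, 0 ≤ d i) (he : ∀ j, 0 ≤ e j)
    (hkerCol : ∀ j, e j = 0 → ∀ i, A i j = 0) :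
    condA A d e ↔ condC A d e := by
  set B := (diagonal fun i => ((√(d i) : ℂ))⁻¹) * A
  have hN : Nmat A d e = B * diagonal fun j => ((√(e j) : ℂ))⁻¹ := by
    simp [Nmat, B, Real.sqrt_inv]
  have hBB : Bᴴ * B = Aᴴ * (diagonal fun i => ((d i)⁻¹ : ℂ)) * A := by
    simp only [B, conjTranspose_mul, diagonal_conjTranspose, Matrix.mul_assoc]
    rw [← Matrix.mul_assoc (diagonal _), diagonal_mul_diagonal]
    congr 3
    ext i
    simp [← Complex.ofReal_inv, ← Complex.ofReal_mul, ← mul_inv, Real.mul_self_sqrt (hd i)]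
  have hDe : (diagonal fun j => ((√(e j) ^ 2 : ℝ) : ℂ)) = diagonal fun j => (e j : ℂ) := by
    simp [Real.sq_sqrt (he _)]
  rw [condA, condC, hN, ← hDe, ← hBB]
  refine (posSemidef_diagonal_sq_sub_iff fun j hj i => ?_).symm
  simp [B, mul_apply, hkerCol j ((Real.sqrt_eq_zero (he j)).1 hj)]

theorem isHermitian_blockMat (z : ℂ) : (blockMat A d e z).IsHermitian := by
  simp [IsHermitian, blockMat, fromBlocks_conjTranspose, diagonal_conjTranspose, conjTranspose_smul]

theorem condE_of_sum_norm_le (hrow : ∀ i, ∑ j, ‖A i j‖ ≤ d i) (hcol : ∀ j, ∑ i, ‖A i j‖ ≤ e j) :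
    condE A d e := by
  intro z hz
  refine (isHermitian_blockMat z).posSemidef_of_sum_norm_le ?_
  rintro (i | j) <;>
    simp only [Finset.sum_erase_eq_sub (Finset.mem_univ _), Fintype.sum_sum_type]
  · simp [blockMat, diagonal_apply, apply_ite (‖·‖), ← Finset.mul_sum]
    exact (mul_le_of_le_one_left (by positivity) hz).trans (hrow i)
  · simp [blockMat, diagonal_apply, apply_ite (‖·‖), ← Finset.mul_sum]
    exact (mul_le_of_le_one_left (by positivity) hz).trans (hcol j)

theorem sum_norm_eq_of_nonneg {ι : Type*} {s : Finset ι} {f : ι → ℂ} {r : ℝ}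
    (hf : ∀ i ∈ s, 0 ≤ f i) (hr : (r : ℂ) = ∑ i ∈ s, f i) : ∑ i ∈ s, ‖f i‖ = r := by
  have : ((∑ i ∈ s, ‖f i‖ : ℝ) : ℂ) = r := by
    push_cast
    rw [hr]
    exact Finset.sum_congr rfl fun i hi => Complex.norm_of_nonneg' (hf i hi)
  exact_mod_cast this

/-- conditions (a)–(e) are equivalent, they are implied by diagonal dominance,
and in particular they hold when `A` is entrywise nonnegative with row sums `d` and
column sums `e`. -/
theorem stmt_2 (A : Matrix (Fin m) (Fin n) ℂ) (d : Fin m → ℝ) (e : Fin n → ℝ)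
    (hd : ∀ i, 0 ≤ d i) (he : ∀ j, 0 ≤ e j)
    (hkerRow : ∀ i, d i = 0 → ∀ j, A i j = 0)
    (hkerCol : ∀ j, e j = 0 → ∀ i, A i j = 0) :
    ([condA A d e, condB A d e, condC A d e, condD A d e, condE A d e].TFAE) ∧
    (((∀ i, (∑ j, ‖A i j‖) ≤ d i) ∧ (∀ j, (∑ i, ‖A i j‖) ≤ e j)) →
        condA A d e ∧ condB A d e ∧ condC A d e ∧ condD A d e ∧ condE A d e) ∧
    (((∀ i j, 0 ≤ (A i j).re ∧ (A i j).im = 0) ∧ (∀ i, (d i : ℂ) = ∑ j, A i j) ∧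
        (∀ j, (e j : ℂ) = ∑ i, A i j)) →
        condA A d e ∧ condB A d e ∧ condC A d e ∧ condD A d e ∧ condE A d e) := by
  have hTFAE : [condA A d e, condB A d e, condC A d e, condD A d e, condE A d e].TFAE := by
    tfae_have 1 ↔ 3 := condA_iff_condC hd he hkerCol
    tfae_have 2 ↔ 3 := condB_iff_condC hd he hkerRow hkerCol
    tfae_have 2 → 5 := condE_of_condB he hkerCol
    tfae_have 5 → 4 := fun h => ⟨1, norm_one, h 1 norm_one.le⟩
    tfae_have 4 → 2 := fun ⟨z, hz, h⟩ => (condB_iff_blockMat_posSemidef he hkerCol hz).2 h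
    tfae_finish
  have hall (hE : condE A d e) :
      condA A d e ∧ condB A d e ∧ condC A d e ∧ condD A d e ∧ condE A d e :=
    ⟨(hTFAE.out 0 4).2 hE, (hTFAE.out 1 4).2 hE, (hTFAE.out 2 4).2 hE, (hTFAE.out 3 4).2 hE, hE⟩
  refine ⟨hTFAE, fun ⟨hrow, hcol⟩ => hall (condE_of_sum_norm_le hrow hcol), ?_⟩
  rintro ⟨hA, hrow, hcol⟩
  have hA' : ∀ i j, 0 ≤ A i j := fun i j => Complex.nonneg_iff.2 ⟨(hA i j).1, (hA i j).2.symm⟩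
  exact hall (condE_of_sum_norm_le
    (fun i => (sum_norm_eq_of_nonneg (fun j _ => hA' i j) (hrow i)).le)
    (fun j => (sum_norm_eq_of_nonneg (fun i _ => hA' i j) (hcol j)).le))

end Stmt2
end

section
/- Let A, Ã ∈ ℂ^{m×n} and let d ∈ ℝ^m, e ∈ ℝ^n have nonnegative entries, D_in := diag(d), D_out := diag(e); suppose whenever d_i = 0 the i-th rows of both A and Ã are zero and whenever e_j = 0 the j-th columns of both A and Ã are zero. Let D⁻ denote the diagonal matrix of reciprocals of the nonzero entries of a nonnegative diagonal matrix D (0 elsewhere), and D^{−1/2} := (D⁻)^{1/2} entrywise. Set N := D_in^{−1/2}·A·D_out^{−1/2} and Ñ := D_in^{−1/2}·Ã·D_out^{−1/2}. Then Ã is an ε-SV approximation of A with respect to D_in, D_out if and only if Ñ is an ε-normalized-SV approximation of N. -/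
open Matrix ComplexOrder

/-- `Ã` is an `ε`-normalized-SV approximation of `A`. -/
noncomputable def IsNSVApprox {α β : Type*} [Fintype α] [Fintype β] [DecidableEq α]
    [DecidableEq β] (ε : ℝ) (A Atil : Matrix α β ℂ) : Prop :=
  ((1 : Matrix α α ℂ) - A * Aᴴ).PosSemidef ∧
  ((1 : Matrix β β ℂ) - Aᴴ * A).PosSemidef ∧
  ∀ (x : α → ℂ) (y : β → ℂ),
    ‖star x ⬝ᵥ (Atil - A).mulVec y‖ ≤
      ε / 4 * ((star x ⬝ᵥ ((1 : Matrix α α ℂ) - A * Aᴴ).mulVec x).re +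
        (star y ⬝ᵥ ((1 : Matrix β β ℂ) - Aᴴ * A).mulVec y).re)

/-- `Ã` is an `ε`-SV approximation of `A` with respect to the diagonal degree matrices
`D_in = diag d` and `D_out = diag e` (with `D⁻` the pseudo-inverse of a nonnegative
diagonal matrix, realized by real inversion with convention `0⁻¹ = 0`). -/
noncomputable def IsSVApprox {m n : ℕ} (ε : ℝ) (d : Fin m → ℝ) (e : Fin n → ℝ)
    (A Atil : Matrix (Fin m) (Fin n) ℂ) : Prop :=
  (∀ i, d i = 0 → ∀ j, A i j = 0) ∧
  (∀ j, e j = 0 → ∀ i, A i j = 0) ∧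
  ((Matrix.diagonal fun i => (d i : ℂ)) -
      A * (Matrix.diagonal fun j => ((e j)⁻¹ : ℂ)) * Aᴴ).PosSemidef ∧
  ((Matrix.diagonal fun j => (e j : ℂ)) -
      Aᴴ * (Matrix.diagonal fun i => ((d i)⁻¹ : ℂ)) * A).PosSemidef ∧
  ∀ (x : Fin m → ℂ) (y : Fin n → ℂ),
    ‖star x ⬝ᵥ (Atil - A).mulVec y‖ ≤
      ε / 4 *
        ((star x ⬝ᵥ ((Matrix.diagonal fun i => (d i : ℂ)) -
            A * (Matrix.diagonal fun j => ((e j)⁻¹ : ℂ)) * Aᴴ).mulVec x).re +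
         (star y ⬝ᵥ ((Matrix.diagonal fun j => (e j : ℂ)) -
            Aᴴ * (Matrix.diagonal fun i => ((d i)⁻¹ : ℂ)) * A).mulVec y).re)

/-! Write `S = D_in^{-1/2}`, `R = D_in^{1/2}`, `T = D_out^{-1/2}`, `R' = D_out^{1/2}` and
`N = S A T`. The kernel conditions say `R S A = A = A T R'`, so `E = R (I - N N*) R`,
`F = R' (I - N* N) R'` and `Ã - A = R (Ñ - N) R'`; in the other direction
`S E S = (I - N N*) - (I - S R)`, where `I - S R` is the 0/1 diagonal projection onto the
coordinates of degree zero. Positive semidefiniteness and the bilinear bound are both preserved by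
congruences (substitute `x ↦ B x`, `y ↦ C y`), and adding the positive semidefinite `I - S R` to
the right-hand side only weakens the bound since `ε ≥ 0`. -/

variable {α β γ δ : Type*} [Fintype α] [Fintype β]

def IsSVBounded (c : ℝ) (M : Matrix α β ℂ) (E : Matrix α α ℂ) (F : Matrix β β ℂ) : Prop :=
  ∀ (x : α → ℂ) (y : β → ℂ),
    ‖star x ⬝ᵥ M *ᵥ y‖ ≤ c * ((star x ⬝ᵥ E *ᵥ x).re + (star y ⬝ᵥ F *ᵥ y).re)

lemma star_mulVec_dotProduct_mulVec_mulVec [Fintype γ] [Fintype δ] (B : Matrix γ α ℂ)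
    (M : Matrix γ δ ℂ) (C : Matrix δ β ℂ) (x : α → ℂ) (y : β → ℂ) :
    star (B *ᵥ x) ⬝ᵥ M *ᵥ (C *ᵥ y) = star x ⬝ᵥ (Bᴴ * M * C) *ᵥ y := by
  simp only [star_mulVec, ← mulVec_mulVec, dotProduct_mulVec]

lemma Matrix.PosSemidef.re_dotProduct_mulVec_le {G G' : Matrix α α ℂ}
    (h : (G' - G).PosSemidef) (z : α → ℂ) :
    (star z ⬝ᵥ G *ᵥ z).re ≤ (star z ⬝ᵥ G' *ᵥ z).re := by
  have := (Complex.le_def.mp (h.dotProduct_mulVec_nonneg z)).1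
  simp only [sub_mulVec, dotProduct_sub, Complex.sub_re, Complex.zero_re] at this
  linarith

namespace IsSVBounded

variable {c : ℝ} {M : Matrix α β ℂ} {E E' : Matrix α α ℂ} {F F' : Matrix β β ℂ}

lemma conj [Fintype γ] [Fintype δ] (h : IsSVBounded c M E F) (B : Matrix α γ ℂ)
    (C : Matrix β δ ℂ) :
    IsSVBounded c (Bᴴ * M * C) (Bᴴ * E * B) (Cᴴ * F * C) := by
  intro x y
  simpa only [star_mulVec_dotProduct_mulVec_mulVec] using h (B *ᵥ x) (C *ᵥ y)

lemma mono (hc : 0 ≤ c) (h : IsSVBounded c M E F) (hE : (E' - E).PosSemidef)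
    (hF : (F' - F).PosSemidef) : IsSVBounded c M E' F' := fun x y =>
  (h x y).trans <| mul_le_mul_of_nonneg_left
    (add_le_add (hE.re_dotProduct_mulVec_le x) (hF.re_dotProduct_mulVec_le y)) hc

end IsSVBounded

section Normalization

variable [DecidableEq α] [DecidableEq β] {d : α → ℝ} {e : β → ℝ}

omit [Fintype α] in
lemma conjTranspose_diagonal_ofReal (f : α → ℝ) :
    (diagonal fun i => (f i : ℂ))ᴴ = diagonal fun i => (f i : ℂ) := by
  simp [diagonal_conjTranspose]

noncomputable def sqrtDiag (d : α → ℝ) : Matrix α α ℂ := diagonal fun i => (√(d i) : ℂ)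

noncomputable def invSqrtDiag (d : α → ℝ) : Matrix α α ℂ := diagonal fun i => (√((d i)⁻¹) : ℂ)

omit [Fintype α] in
lemma conjTranspose_sqrtDiag (d : α → ℝ) : (sqrtDiag d)ᴴ = sqrtDiag d :=
  conjTranspose_diagonal_ofReal _

omit [Fintype α] in
lemma conjTranspose_invSqrtDiag (d : α → ℝ) : (invSqrtDiag d)ᴴ = invSqrtDiag d :=
  conjTranspose_diagonal_ofReal _

lemma sqrtDiag_mul_self (hd : ∀ i, 0 ≤ d i) :
    sqrtDiag d * sqrtDiag d = diagonal fun i => (d i : ℂ) := by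
  simp [sqrtDiag, ← Complex.ofReal_mul, Real.mul_self_sqrt (hd _)]

lemma invSqrtDiag_mul_self (hd : ∀ i, 0 ≤ d i) :
    invSqrtDiag d * invSqrtDiag d = diagonal fun i => ((d i : ℂ))⁻¹ := by
  simp only [invSqrtDiag, diagonal_mul_diagonal, ← Complex.ofReal_mul,
    Real.mul_self_sqrt (inv_nonneg.2 (hd _)), Complex.ofReal_inv]

lemma invSqrtDiag_mul_diagonal_mul_invSqrtDiag (hd : ∀ i, 0 ≤ d i) :
    invSqrtDiag d * (diagonal fun i => (d i : ℂ)) * invSqrtDiag d =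
      invSqrtDiag d * sqrtDiag d := by
  simp only [invSqrtDiag, sqrtDiag, diagonal_mul_diagonal]
  congr 1; ext i
  have hsq : (d i : ℂ) = √(d i) * √(d i) := mod_cast (Real.mul_self_sqrt (hd i)).symm
  rw [hsq, Real.sqrt_inv, Complex.ofReal_inv]
  rcases eq_or_ne (√(d i) : ℂ) 0 with h | h
  · simp [h]
  · field_simp

lemma sqrtDiag_mul_invSqrtDiag_mul (hd : ∀ i, 0 ≤ d i) {A : Matrix α γ ℂ}
    (hA : ∀ i, d i = 0 → ∀ j, A i j = 0) : sqrtDiag d * invSqrtDiag d * A = A := by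
  ext i j
  by_cases h : d i = 0
  · simp [sqrtDiag, invSqrtDiag, h, hA i h j]
  · simp [sqrtDiag, invSqrtDiag, Real.sqrt_inv, h, hd i]

lemma mul_invSqrtDiag_mul_sqrtDiag (hd : ∀ i, 0 ≤ d i) {A : Matrix γ α ℂ}
    (hA : ∀ j, d j = 0 → ∀ i, A i j = 0) : A * invSqrtDiag d * sqrtDiag d = A := by
  ext i j
  by_cases h : d j = 0
  · simp [sqrtDiag, invSqrtDiag, h, hA j h i]
  · simp [sqrtDiag, invSqrtDiag, Real.sqrt_inv, h, hd j]

lemma posSemidef_one_sub_invSqrtDiag_mul_sqrtDiag (hd : ∀ i, 0 ≤ d i) :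
    (1 - invSqrtDiag d * sqrtDiag d).PosSemidef := by
  rw [invSqrtDiag, sqrtDiag, diagonal_mul_diagonal, ← diagonal_one, diagonal_sub,
    posSemidef_diagonal_iff]
  intro i
  by_cases h : d i = 0
  · simp [h]
  · simp [Real.sqrt_inv, h, hd i]

noncomputable def normalized (d : α → ℝ) (e : β → ℝ) (A : Matrix α β ℂ) : Matrix α β ℂ :=
  invSqrtDiag d * A * invSqrtDiag e

/-- The matrices `E = degreeDefect d e A` and `F = degreeDefect e d Aᴴ` of the SV approximation. -/
noncomputable def degreeDefect (d : α → ℝ) (e : β → ℝ) (A : Matrix α β ℂ) : Matrix α α ℂ :=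
  (diagonal fun i => (d i : ℂ)) - A * (diagonal fun j => ((e j)⁻¹ : ℂ)) * Aᴴ

variable {A B : Matrix α β ℂ}

lemma conjTranspose_normalized (d : α → ℝ) (e : β → ℝ) (A : Matrix α β ℂ) :
    (normalized d e A)ᴴ = normalized e d Aᴴ := by
  simp [normalized, conjTranspose_invSqrtDiag, Matrix.mul_assoc]

lemma normalized_sub (d : α → ℝ) (e : β → ℝ) (A B : Matrix α β ℂ) :
    normalized d e B - normalized d e A = normalized d e (B - A) := by
  simp [normalized, Matrix.mul_sub, Matrix.sub_mul]

lemma sqrtDiag_mul_normalized_mul_sqrtDiag (hd : ∀ i, 0 ≤ d i) (he : ∀ j, 0 ≤ e j)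
    (hrow : ∀ i, d i = 0 → ∀ j, A i j = 0) (hcol : ∀ j, e j = 0 → ∀ i, A i j = 0) :
    sqrtDiag d * normalized d e A * sqrtDiag e = A := by
  simp only [normalized, ← Matrix.mul_assoc, sqrtDiag_mul_invSqrtDiag_mul hd hrow,
    mul_invSqrtDiag_mul_sqrtDiag he hcol]

lemma degreeDefect_eq_sqrtDiag_mul_one_sub_normalized_mul (hd : ∀ i, 0 ≤ d i)
    (he : ∀ j, 0 ≤ e j) (hrow : ∀ i, d i = 0 → ∀ j, A i j = 0) :
    degreeDefect d e A =
      sqrtDiag d * (1 - normalized d e A * (normalized d e A)ᴴ) * sqrtDiag d := by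
  have hrow' : ∀ i, d i = 0 → ∀ j, Aᴴ j i = 0 := fun i h j => by simp [hrow i h j]
  calc degreeDefect d e A = sqrtDiag d * sqrtDiag d - (sqrtDiag d * invSqrtDiag d * A) *
        (invSqrtDiag e * invSqrtDiag e) * (Aᴴ * invSqrtDiag d * sqrtDiag d) := by
        rw [degreeDefect, sqrtDiag_mul_self hd, invSqrtDiag_mul_self he,
          sqrtDiag_mul_invSqrtDiag_mul hd hrow, mul_invSqrtDiag_mul_sqrtDiag hd hrow']
    _ = _ := by
        rw [conjTranspose_normalized]
        simp only [normalized, Matrix.mul_sub, Matrix.sub_mul, Matrix.mul_one, Matrix.mul_assoc]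

lemma one_sub_normalized_mul_conjTranspose (hd : ∀ i, 0 ≤ d i) (he : ∀ j, 0 ≤ e j) :
    1 - normalized d e A * (normalized d e A)ᴴ =
      (1 - invSqrtDiag d * sqrtDiag d) + invSqrtDiag d * degreeDefect d e A * invSqrtDiag d := by
  rw [degreeDefect, Matrix.mul_sub, Matrix.sub_mul, invSqrtDiag_mul_diagonal_mul_invSqrtDiag hd,
    ← invSqrtDiag_mul_self he, conjTranspose_normalized]
  simp only [normalized, Matrix.mul_assoc]
  abel

lemma degreeDefect_conjTranspose_eq_sqrtDiag_mul_one_sub_conjTranspose_mul (hd : ∀ i, 0 ≤ d i)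
    (he : ∀ j, 0 ≤ e j) (hcol : ∀ j, e j = 0 → ∀ i, A i j = 0) :
    degreeDefect e d Aᴴ =
      sqrtDiag e * (1 - (normalized d e A)ᴴ * normalized d e A) * sqrtDiag e := by
  simpa [conjTranspose_normalized] using
    degreeDefect_eq_sqrtDiag_mul_one_sub_normalized_mul he hd (A := Aᴴ)
      fun j h i => by simp [hcol j h i]

lemma one_sub_conjTranspose_mul_normalized (hd : ∀ i, 0 ≤ d i) (he : ∀ j, 0 ≤ e j) :
    1 - (normalized d e A)ᴴ * normalized d e A =
      (1 - invSqrtDiag e * sqrtDiag e) + invSqrtDiag e * degreeDefect e d Aᴴ * invSqrtDiag e := by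
  simpa [conjTranspose_normalized] using one_sub_normalized_mul_conjTranspose he hd (A := Aᴴ)

lemma posSemidef_degreeDefect_iff (hd : ∀ i, 0 ≤ d i) (he : ∀ j, 0 ≤ e j)
    (hrow : ∀ i, d i = 0 → ∀ j, A i j = 0) :
    (degreeDefect d e A).PosSemidef ↔
      (1 - normalized d e A * (normalized d e A)ᴴ).PosSemidef := by
  refine ⟨fun h => ?_, fun h => ?_⟩
  · rw [one_sub_normalized_mul_conjTranspose hd he]
    refine (posSemidef_one_sub_invSqrtDiag_mul_sqrtDiag hd).add ?_
    simpa [conjTranspose_invSqrtDiag] using h.conjTranspose_mul_mul_same (invSqrtDiag d)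
  · rw [degreeDefect_eq_sqrtDiag_mul_one_sub_normalized_mul hd he hrow]
    simpa [conjTranspose_sqrtDiag] using h.conjTranspose_mul_mul_same (sqrtDiag d)

lemma posSemidef_degreeDefect_conjTranspose_iff (hd : ∀ i, 0 ≤ d i) (he : ∀ j, 0 ≤ e j)
    (hcol : ∀ j, e j = 0 → ∀ i, A i j = 0) :
    (degreeDefect e d Aᴴ).PosSemidef ↔
      (1 - (normalized d e A)ᴴ * normalized d e A).PosSemidef := by
  simpa [conjTranspose_normalized] using
    posSemidef_degreeDefect_iff he hd (A := Aᴴ) fun j h i => by simp [hcol j h i]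

lemma isSVBounded_degreeDefect_iff {c : ℝ} (hc : 0 ≤ c) (hd : ∀ i, 0 ≤ d i) (he : ∀ j, 0 ≤ e j)
    (hrowA : ∀ i, d i = 0 → ∀ j, A i j = 0) (hcolA : ∀ j, e j = 0 → ∀ i, A i j = 0)
    (hrowB : ∀ i, d i = 0 → ∀ j, B i j = 0) (hcolB : ∀ j, e j = 0 → ∀ i, B i j = 0) :
    IsSVBounded c (B - A) (degreeDefect d e A) (degreeDefect e d Aᴴ) ↔
      IsSVBounded c (normalized d e B - normalized d e A)
        (1 - normalized d e A * (normalized d e A)ᴴ)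
        (1 - (normalized d e A)ᴴ * normalized d e A) := by
  refine ⟨fun h => ?_, fun h => ?_⟩
  · have h' := h.conj (invSqrtDiag d) (invSqrtDiag e)
    rw [conjTranspose_invSqrtDiag, conjTranspose_invSqrtDiag] at h'
    rw [normalized_sub]
    refine h'.mono hc ?_ ?_
    · rw [one_sub_normalized_mul_conjTranspose hd he, add_sub_cancel_right]
      exact posSemidef_one_sub_invSqrtDiag_mul_sqrtDiag hd
    · rw [one_sub_conjTranspose_mul_normalized hd he, add_sub_cancel_right]
      exact posSemidef_one_sub_invSqrtDiag_mul_sqrtDiag he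
  · have h' := h.conj (sqrtDiag d) (sqrtDiag e)
    rwa [conjTranspose_sqrtDiag, conjTranspose_sqrtDiag, normalized_sub,
      sqrtDiag_mul_normalized_mul_sqrtDiag hd he
        (fun i h j => by simp [hrowA i h j, hrowB i h j])
        (fun j h i => by simp [hcolA j h i, hcolB j h i]),
      ← degreeDefect_eq_sqrtDiag_mul_one_sub_normalized_mul hd he hrowA,
      ← degreeDefect_conjTranspose_eq_sqrtDiag_mul_one_sub_conjTranspose_mul hd he hcolA] at h'

end Normalization

lemma isSVApprox_iff {m n : ℕ} (ε : ℝ) (d : Fin m → ℝ) (e : Fin n → ℝ)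
    (A B : Matrix (Fin m) (Fin n) ℂ) :
    IsSVApprox ε d e A B ↔
      (∀ i, d i = 0 → ∀ j, A i j = 0) ∧ (∀ j, e j = 0 → ∀ i, A i j = 0) ∧
      (degreeDefect d e A).PosSemidef ∧ (degreeDefect e d Aᴴ).PosSemidef ∧
      IsSVBounded (ε / 4) (B - A) (degreeDefect d e A) (degreeDefect e d Aᴴ) := by
  simp only [IsSVApprox, degreeDefect, IsSVBounded, conjTranspose_conjTranspose]

lemma isNSVApprox_iff [DecidableEq α] [DecidableEq β] (ε : ℝ) (N N' : Matrix α β ℂ) :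
    IsNSVApprox ε N N' ↔
      (1 - N * Nᴴ).PosSemidef ∧ (1 - Nᴴ * N).PosSemidef ∧
      IsSVBounded (ε / 4) (N' - N) (1 - N * Nᴴ) (1 - Nᴴ * N) :=
  Iff.rfl

/-- SV approximation with respect to `D_in`, `D_out` is equivalent to
normalized-SV approximation of the normalized matrices
`N = D_in^{−1/2}·A·D_out^{−1/2}` and `Ñ = D_in^{−1/2}·Ã·D_out^{−1/2}`. -/
theorem stmt_5 {m n : ℕ} (A Atil : Matrix (Fin m) (Fin n) ℂ)
    (d : Fin m → ℝ) (e : Fin n → ℝ)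
    (hd : ∀ i, 0 ≤ d i) (he : ∀ j, 0 ≤ e j)
    (hkerRowA : ∀ i, d i = 0 → ∀ j, A i j = 0)
    (hkerColA : ∀ j, e j = 0 → ∀ i, A i j = 0)
    (hkerRowAtil : ∀ i, d i = 0 → ∀ j, Atil i j = 0)
    (hkerColAtil : ∀ j, e j = 0 → ∀ i, Atil i j = 0)
    (ε : ℝ) (hε : 0 ≤ ε) :
    IsSVApprox ε d e A Atil ↔
      IsNSVApprox ε
        ((Matrix.diagonal fun i => (Real.sqrt ((d i)⁻¹) : ℂ)) * A *
          (Matrix.diagonal fun j => (Real.sqrt ((e j)⁻¹) : ℂ)))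
        ((Matrix.diagonal fun i => (Real.sqrt ((d i)⁻¹) : ℂ)) * Atil *
          (Matrix.diagonal fun j => (Real.sqrt ((e j)⁻¹) : ℂ))) := by
  change _ ↔ IsNSVApprox ε (normalized d e A) (normalized d e Atil)
  rw [isSVApprox_iff, isNSVApprox_iff, posSemidef_degreeDefect_iff hd he hkerRowA,
    posSemidef_degreeDefect_conjTranspose_iff hd he hkerColA,
    isSVBounded_degreeDefect_iff (by positivity) hd he hkerRowA hkerColA hkerRowAtil hkerColAtil]
  exact ⟨fun h => h.2.2, fun h => ⟨hkerRowA, hkerColA, h⟩⟩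
end

section
/- Let N, Ñ ∈ ℂ^{n×n} with Ñ an ε-normalized-SV approximation of N, and let U, V ∈ ℂ^{n×n} satisfy that I − U*U and I − V*V are positive semidefinite (i.e. U and V have spectral norm at most 1). Then U·Ñ·V is an ε-normalized-SV approximation of U·N·V. -/
/-!
Put `M = U N V`. Since `U`, `N`, `V` are contractions, expanding `1 - M Mᴴ` gives
`1 - M Mᴴ = U (1 - N Nᴴ) Uᴴ + (1 - U Uᴴ) + (U N) (1 - V Vᴴ) (U N)ᴴ`,
so `1 - M Mᴴ` dominates `U (1 - N Nᴴ) Uᴴ` in the Loewner order, and symmetrically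
`1 - Mᴴ M` dominates `Vᴴ (1 - Nᴴ N) V`. As `xᴴ (U Ñ V - M) y = (Uᴴ x)ᴴ (Ñ - N) (V y)`,
the bound for `N` at `(Uᴴ x, V y)` gives the bound for `M` at `(x, y)`.
-/

open Matrix ComplexOrder

namespace Matrix

section L2OpNorm

open scoped Matrix.Norms.L2Operator MatrixOrder

variable {m n : Type*} [Fintype m] [Fintype n] [DecidableEq n]

theorem posSemidef_one_sub_conjTranspose_mul_self_iff (A : Matrix m n ℂ) :
    (1 - Aᴴ * A).PosSemidef ↔ ‖A‖ ≤ 1 := by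
  rw [← le_iff, ← CStarAlgebra.norm_le_one_iff_of_nonneg _
      (nonneg_iff_posSemidef.mpr (posSemidef_conjTranspose_mul_self A)),
    l2_opNorm_conjTranspose_mul_self, ← abs_le_one_iff_mul_self_le_one, abs_norm]

theorem PosSemidef.one_sub_mul_conjTranspose_self [DecidableEq m] {A : Matrix m n ℂ}
    (hA : (1 - Aᴴ * A).PosSemidef) : (1 - A * Aᴴ).PosSemidef := by
  have h := posSemidef_one_sub_conjTranspose_mul_self_iff Aᴴ
  rw [conjTranspose_conjTranspose, l2_opNorm_conjTranspose] at h
  exact h.mpr ((posSemidef_one_sub_conjTranspose_mul_self_iff A).mp hA)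

end L2OpNorm

section Identities

variable {R : Type*} [CommRing R] [StarRing R] {m n l k : Type*} [Fintype n] [Fintype l]

theorem one_sub_mul_mul_conjTranspose [DecidableEq m] [DecidableEq n] (A : Matrix m n R)
    (B : Matrix n l R) :
    1 - A * B * (A * B)ᴴ = (1 - A * Aᴴ) + A * (1 - B * Bᴴ) * Aᴴ := by
  simp only [conjTranspose_mul, Matrix.mul_sub, Matrix.sub_mul, Matrix.mul_one, Matrix.mul_assoc]
  abel

theorem dotProduct_mul_mul_mulVec [Fintype m] [Fintype k] (x : m → R) (A : Matrix m n R)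
    (B : Matrix n l R) (C : Matrix l k R) (y : k → R) :
    star x ⬝ᵥ (A * B * C) *ᵥ y = star (Aᴴ *ᵥ x) ⬝ᵥ B *ᵥ (C *ᵥ y) := by
  rw [← mulVec_mulVec, ← mulVec_mulVec, dotProduct_mulVec, star_mulVec,
    conjTranspose_conjTranspose]

end Identities

variable {m n l k : Type*} [Fintype m] [Fintype n] [Fintype l] [Fintype k]

theorem PosSemidef.re_dotProduct_mulVec_le_s6 {P Q : Matrix n n ℂ} (h : (P - Q).PosSemidef)
    (x : n → ℂ) : (star x ⬝ᵥ Q *ᵥ x).re ≤ (star x ⬝ᵥ P *ᵥ x).re := by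
  have h₀ := (Complex.le_def.mp (h.dotProduct_mulVec_nonneg x)).1
  rw [sub_mulVec, dotProduct_sub, Complex.sub_re, Complex.zero_re] at h₀
  linarith

theorem posSemidef_one_sub_mul_mul_conjTranspose_sub [DecidableEq m] [DecidableEq n]
    [DecidableEq l] {A : Matrix m n ℂ} {C : Matrix l k ℂ} (hA : (1 - A * Aᴴ).PosSemidef)
    (hC : (1 - C * Cᴴ).PosSemidef) (B : Matrix n l ℂ) :
    (1 - A * B * C * (A * B * C)ᴴ - A * (1 - B * Bᴴ) * Aᴴ).PosSemidef := by
  rw [one_sub_mul_mul_conjTranspose, one_sub_mul_mul_conjTranspose, add_sub_right_comm,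
    add_sub_cancel_right]
  exact hA.add (hC.mul_mul_conjTranspose_same (A * B))

theorem posSemidef_one_sub_conjTranspose_mul_mul_mul_sub [DecidableEq n] [DecidableEq l]
    [DecidableEq k] {A : Matrix m n ℂ} {C : Matrix l k ℂ} (hA : (1 - Aᴴ * A).PosSemidef)
    (hC : (1 - Cᴴ * C).PosSemidef) (B : Matrix n l ℂ) :
    (1 - (A * B * C)ᴴ * (A * B * C) - Cᴴ * (1 - Bᴴ * B) * C).PosSemidef := by
  have h := posSemidef_one_sub_mul_mul_conjTranspose_sub (A := Cᴴ) (C := Aᴴ)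
    (by rwa [conjTranspose_conjTranspose]) (by rwa [conjTranspose_conjTranspose]) Bᴴ
  simp only [conjTranspose_mul, conjTranspose_conjTranspose, Matrix.mul_assoc] at h ⊢
  exact h

end Matrix

open Matrix in
/-- normalized-SV approximation is preserved under multiplication on the left
and right by matrices of spectral norm at most `1`. -/
theorem stmt_6 {n : ℕ} (N Ntil U V : Matrix (Fin n) (Fin n) ℂ) (ε : ℝ) (hε : 0 ≤ ε)
    (hU : ((1 : Matrix (Fin n) (Fin n) ℂ) - Uᴴ * U).PosSemidef)
    (hV : ((1 : Matrix (Fin n) (Fin n) ℂ) - Vᴴ * V).PosSemidef)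
    (hNSV : IsNSVApprox ε N Ntil) :
    IsNSVApprox ε (U * N * V) (U * Ntil * V) := by
  obtain ⟨hN₁, hN₂, hN⟩ := hNSV
  have hleft := posSemidef_one_sub_mul_mul_conjTranspose_sub
    hU.one_sub_mul_conjTranspose_self hV.one_sub_mul_conjTranspose_self N
  have hright := posSemidef_one_sub_conjTranspose_mul_mul_mul_sub hU hV N
  refine ⟨by simpa using hleft.add (hN₁.mul_mul_conjTranspose_same U),
    by simpa using hright.add (hN₂.conjTranspose_mul_mul_same V), fun x y => ?_⟩
  have hx : (star (Uᴴ *ᵥ x) ⬝ᵥ (1 - N * Nᴴ) *ᵥ (Uᴴ *ᵥ x)).re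
      ≤ (star x ⬝ᵥ (1 - U * N * V * (U * N * V)ᴴ) *ᵥ x).re := by
    simpa only [dotProduct_mul_mul_mulVec] using hleft.re_dotProduct_mulVec_le_s6 x
  have hy : (star (V *ᵥ y) ⬝ᵥ (1 - Nᴴ * N) *ᵥ (V *ᵥ y)).re
      ≤ (star y ⬝ᵥ (1 - (U * N * V)ᴴ * (U * N * V)) *ᵥ y).re := by
    simpa only [dotProduct_mul_mul_mulVec, conjTranspose_conjTranspose] using
      hright.re_dotProduct_mulVec_le_s6 y
  calc ‖star x ⬝ᵥ (U * Ntil * V - U * N * V) *ᵥ y‖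
      = ‖star (Uᴴ *ᵥ x) ⬝ᵥ (Ntil - N) *ᵥ (V *ᵥ y)‖ := by
        rw [← Matrix.sub_mul, ← Matrix.mul_sub, dotProduct_mul_mul_mulVec]
    _ ≤ _ := hN _ _
    _ ≤ _ := mul_le_mul_of_nonneg_left (add_le_add hx hy) (by positivity)
end

section
/- Let N, Ñ ∈ ℂ^{n×n} and ε ≥ 0. Suppose that for every pair of unitary matrices U, V ∈ ℂ^{n×n}, the matrix U·Ñ·V is a standard (ε/2)-approximation of U·N·V with respect to degree matrix I, i.e. I − S_{UNV} is positive semidefinite and for all x, y ∈ ℂⁿ, |x*(U·Ñ·V − U·N·V)y| ≤ (ε/4)·(x*(I − S_{UNV})x + y*(I − S_{UNV})y), where S_M := (M + M*)/2. Then Ñ is an ε-normalized-SV approximation of N. -/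
open Matrix ComplexOrder

/-- The symmetrization `S_M := (M + M*)/2`. -/
noncomputable def symPart {n : ℕ} (M : Matrix (Fin n) (Fin n) ℂ) :
    Matrix (Fin n) (Fin n) ℂ :=
  (2 : ℂ)⁻¹ • (M + Mᴴ)

/-!
Write `N = W H` in polar form, with `W` unitary and `H ≥ 0`. Taking `U = W*`, `V = I` in the
hypothesis gives `I - H ≥ 0` together with the approximation bound for `W* Ñ` against `H`
measured by `I - H`. Since `0 ≤ H ≤ I` we have `H² ≤ H`, so `I - H ≤ I - H² = I - H*H = I - HH*`:
the SV error terms of `H` dominate the standard ones, and left multiplication by the unitary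
`W` transports the resulting SV approximation back to `N`.

The polar decomposition of a possibly singular `N` is obtained by density: it is explicit,
`W = N |N|⁻¹`, for invertible `N`, and the set of matrices admitting one is closed because the
unitary group is compact.
-/

open scoped MatrixOrder

namespace Matrix

variable {𝕜 m n : Type*} [RCLike 𝕜] [Fintype m] [Fintype n] [DecidableEq n]

theorem isCompact_unitaryGroup : IsCompact (unitaryGroup n 𝕜 : Set (Matrix n n 𝕜)) := by
  refine (isCompact_univ_pi fun _ => isCompact_univ_pi fun _ =>
    isCompact_closedBall (0 : 𝕜) 1).of_isClosed_subset (isClosed_unitary (R := Matrix n n 𝕜))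
    fun U hU i _ j _ => ?_
  simpa using entry_norm_bound_of_unitary hU i j

omit [DecidableEq n] in
theorem isClosed_setOf_posSemidef : IsClosed {A : Matrix n n 𝕜 | A.PosSemidef} := by
  simp only [posSemidef_iff_dotProduct_mulVec, Set.ofPred_and, Set.ofPred_forall]
  exact (isClosed_eq continuous_id.matrix_conjTranspose continuous_id).inter <|
    isClosed_iInter fun x => isClosed_le continuous_const <|
      continuous_const.dotProduct (continuous_id.matrix_mulVec continuous_const)

theorem mem_closure_setOf_isUnit_det (A : Matrix n n 𝕜) :
    A ∈ closure {B : Matrix n n 𝕜 | IsUnit B.det} := by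
  have hdense : Dense {t : 𝕜 | ¬ (-A).charpoly.IsRoot t} := by
    simpa [Set.sdiff_eq, Set.compl_ofPred] using dense_univ.sdiff_finite <|
      Polynomial.finite_setOfPred_isRoot (-A).charpoly_monic.ne_zero
  have hcont : Continuous fun t : 𝕜 => A + t • 1 := by fun_prop
  have h0 : A ∈ (fun t : 𝕜 => A + t • 1) '' closure {t | ¬ (-A).charpoly.IsRoot t} :=
    ⟨0, hdense.closure_eq ▸ Set.mem_univ _, by simp⟩
  refine closure_mono ?_ (image_closure_subset_closure_image hcont h0)
  rintro _ ⟨t, ht, rfl⟩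
  simpa [Polynomial.IsRoot, eval_charpoly, smul_one_eq_diagonal, scalar_apply, add_comm,
    isUnit_iff_ne_zero] using ht

theorem exists_unitary_posSemidef_mul_of_isUnit_det {A : Matrix n n 𝕜} (hA : IsUnit A.det) :
    ∃ W ∈ unitaryGroup n 𝕜, (Wᴴ * A).PosSemidef := by
  set S := CFC.abs A
  have hSS : S * S = Aᴴ * A := CFC.abs_mul_abs A
  have hS : S.PosSemidef := (CFC.abs_nonneg A).posSemidef
  have hSdet : IsUnit S.det := by
    refine isUnit_of_mul_isUnit_left (y := S.det) ?_
    rw [← det_mul, hSS, det_mul, det_conjTranspose]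
    exact (isUnit_star.mpr hA).mul hA
  have hWH : (A * S⁻¹)ᴴ = S⁻¹ * Aᴴ := by
    rw [conjTranspose_mul, conjTranspose_nonsing_inv, hS.isHermitian.eq]
  refine ⟨A * S⁻¹, mem_unitaryGroup_iff'.mpr ?_, ?_⟩
  · rw [star_eq_conjTranspose, hWH, Matrix.mul_assoc, ← Matrix.mul_assoc Aᴴ, ← hSS,
      Matrix.mul_assoc, mul_nonsing_inv _ hSdet, Matrix.mul_one, nonsing_inv_mul _ hSdet]
  · rwa [hWH, Matrix.mul_assoc, ← hSS, ← Matrix.mul_assoc, nonsing_inv_mul _ hSdet,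
      Matrix.one_mul]

theorem isClosed_setOf_exists_unitary_posSemidef_mul :
    IsClosed {A : Matrix n n 𝕜 | ∃ W ∈ unitaryGroup n 𝕜, (Wᴴ * A).PosSemidef} := by
  have : CompactSpace (unitaryGroup n 𝕜) := isCompact_iff_compactSpace.mp isCompact_unitaryGroup
  have hclosed : IsClosed
      {p : unitaryGroup n 𝕜 × Matrix n n 𝕜 | ((p.1 : Matrix n n 𝕜)ᴴ * p.2).PosSemidef} :=
    isClosed_setOf_posSemidef.preimage <| by fun_prop
  convert isClosedMap_snd_of_compactSpace _ hclosed using 1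
  ext A
  simp

theorem exists_unitary_posSemidef_mul (A : Matrix n n 𝕜) :
    ∃ W ∈ unitaryGroup n 𝕜, (Wᴴ * A).PosSemidef :=
  closure_minimal (fun _ => exists_unitary_posSemidef_mul_of_isUnit_det)
    isClosed_setOf_exists_unitary_posSemidef_mul (mem_closure_setOf_isUnit_det A)

omit [DecidableEq n] in
theorem star_mulVec_dotProduct_mul_mulVec [DecidableEq m] {U : Matrix m m 𝕜}
    (hU : U ∈ unitaryGroup m 𝕜) (M : Matrix m n 𝕜) (x : m → 𝕜) (y : n → 𝕜) :
    star (U *ᵥ x) ⬝ᵥ (U * M) *ᵥ y = star x ⬝ᵥ M *ᵥ y := by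
  rw [star_mulVec, dotProduct_mulVec, vecMul_vecMul, ← Matrix.mul_assoc, ← star_eq_conjTranspose,
    mem_unitaryGroup_iff'.mp hU, Matrix.one_mul, ← dotProduct_mulVec]

omit [DecidableEq n] in
theorem re_dotProduct_mulVec_le_of_le {P Q : Matrix n n 𝕜} (h : P ≤ Q) (x : n → 𝕜) :
    RCLike.re (star x ⬝ᵥ P *ᵥ x) ≤ RCLike.re (star x ⬝ᵥ Q *ᵥ x) := by
  have := (le_iff.mp h).re_dotProduct_nonneg x
  rw [sub_mulVec, dotProduct_sub, map_sub] at this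
  linarith

theorem mul_self_le_self {H : Matrix n n 𝕜} (h₀ : 0 ≤ H) (h₁ : H ≤ 1) : H * H ≤ H := by
  have := Commute.mul_nonneg h₀ (sub_nonneg.mpr h₁) ((Commute.one_right H).sub_right (Commute.refl H))
  rwa [Matrix.mul_sub, Matrix.mul_one, sub_nonneg] at this

end Matrix

theorem symPart_eq_self_of_isHermitian {n : ℕ} {M : Matrix (Fin n) (Fin n) ℂ}
    (hM : M.IsHermitian) : symPart M = M := by
  rw [symPart, hM.eq, ← two_smul ℂ M, smul_smul, inv_mul_cancel₀ two_ne_zero, one_smul]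

section

variable {α β : Type*} [Fintype α] [Fintype β] [DecidableEq α] [DecidableEq β] {ε : ℝ}

theorem IsNSVApprox.of_unitary_mul {U : Matrix α α ℂ} (hU : U ∈ unitaryGroup α ℂ)
    {A Atil : Matrix α β ℂ} (h : IsNSVApprox ε (U * A) (U * Atil)) : IsNSVApprox ε A Atil := by
  obtain ⟨h₁, h₂, hbound⟩ := h
  have hUU : Uᴴ * U = 1 := mem_unitaryGroup_iff'.mp hU
  have hUU' : U * Uᴴ = 1 := mem_unitaryGroup_iff.mp hU
  have hleft : (1 : Matrix α α ℂ) - U * A * (U * A)ᴴ = U * ((1 - A * Aᴴ) * Uᴴ) := by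
    rw [conjTranspose_mul, Matrix.sub_mul, Matrix.mul_sub, Matrix.one_mul, hUU']
    simp only [Matrix.mul_assoc]
  have hright : (U * A)ᴴ * (U * A) = Aᴴ * A := by
    rw [conjTranspose_mul, Matrix.mul_assoc, ← Matrix.mul_assoc Uᴴ, hUU, Matrix.one_mul]
  refine ⟨?_, hright ▸ h₂, fun x y => ?_⟩
  · have := h₁.conjTranspose_mul_mul_same U
    rwa [hleft, ← Matrix.mul_assoc, ← Matrix.mul_assoc, hUU, Matrix.one_mul, Matrix.mul_assoc,
      hUU, Matrix.mul_one] at this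
  · have := hbound (U *ᵥ x) y
    rwa [← Matrix.mul_sub, star_mulVec_dotProduct_mul_mulVec hU, hleft,
      star_mulVec_dotProduct_mul_mulVec hU, ← mulVec_mulVec, mulVec_mulVec x Uᴴ, hUU,
      one_mulVec, hright] at this

theorem isNSVApprox_of_posSemidef (hε : 0 ≤ ε) {H Htil : Matrix α α ℂ} (hH : H.PosSemidef)
    (hH₁ : (1 - H).PosSemidef)
    (hbound : ∀ x y : α → ℂ, ‖star x ⬝ᵥ (Htil - H) *ᵥ y‖ ≤
      ε / 4 * ((star x ⬝ᵥ (1 - H) *ᵥ x).re + (star y ⬝ᵥ (1 - H) *ᵥ y).re)) :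
    IsNSVApprox ε H Htil := by
  have hle : 1 - H ≤ 1 - H * H := sub_le_sub_left (mul_self_le_self hH.nonneg (le_iff.mpr hH₁)) 1
  have hsq : ((1 : Matrix α α ℂ) - H * H).PosSemidef := (hH₁.nonneg.trans hle).posSemidef
  rw [IsNSVApprox, hH.isHermitian.eq]
  refine ⟨hsq, hsq, fun x y => (hbound x y).trans ?_⟩
  have := add_le_add (re_dotProduct_mulVec_le_of_le hle x) (re_dotProduct_mulVec_le_of_le hle y)
  exact mul_le_mul_of_nonneg_left this (by positivity)

end

/-- if for every pair of unitary matrices `U`, `V` the matrix `U·Ñ·V` is a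
standard `ε/2`-approximation of `U·N·V` with respect to the degree matrix `I`, then `Ñ`
is an `ε`-normalized-SV approximation of `N`. -/
theorem stmt_7 {n : ℕ} (N Ntil : Matrix (Fin n) (Fin n) ℂ) (ε : ℝ) (hε : 0 ≤ ε)
    (h : ∀ U V : Matrix (Fin n) (Fin n) ℂ,
      Uᴴ * U = 1 → U * Uᴴ = 1 → Vᴴ * V = 1 → V * Vᴴ = 1 →
      ((1 : Matrix (Fin n) (Fin n) ℂ) - symPart (U * N * V)).PosSemidef ∧
      ∀ x y : Fin n → ℂ,
        ‖star x ⬝ᵥ (U * Ntil * V - U * N * V).mulVec y‖ ≤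
          ε / 4 *
            ((star x ⬝ᵥ ((1 : Matrix (Fin n) (Fin n) ℂ) - symPart (U * N * V)).mulVec x).re +
             (star y ⬝ᵥ ((1 : Matrix (Fin n) (Fin n) ℂ) - symPart (U * N * V)).mulVec y).re)) :
    IsNSVApprox ε N Ntil := by
  obtain ⟨W, hW, hH⟩ := exists_unitary_posSemidef_mul N
  have hW' : Wᴴ ∈ unitaryGroup (Fin n) ℂ := Unitary.star_mem hW
  obtain ⟨hH₁, hbound⟩ :=
    h Wᴴ 1 (mem_unitaryGroup_iff'.mp hW') (mem_unitaryGroup_iff.mp hW') (by simp) (by simp)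
  simp only [Matrix.mul_one, symPart_eq_self_of_isHermitian hH.isHermitian] at hH₁ hbound
  exact (isNSVApprox_of_posSemidef hε hH hH₁ hbound).of_unitary_mul hW'
end

section
/- There exist constants C > 0 and ε₀ ∈ (0, 1] such that the following holds. For every n ≥ 1, every ℓ ≥ 1, every ε with 0 ≤ ε ≤ ε₀, and all matrices N₁, …, N_ℓ, Ñ₁, …, Ñ_ℓ ∈ ℂ^{n×n} such that Ñᵢ is an ε-normalized-SV approximation of Nᵢ for each i ∈ {1, …, ℓ}, the product Ñ_ℓ·Ñ_{ℓ−1}···Ñ₁ is an (ε + C·ε²)-normalized-SV approximation of N_ℓ·N_{ℓ−1}···N₁. -/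
/-!
Write `defect A y = ‖y‖² - ‖A y‖²`; the two quadratic forms of the definition are `defect Aᴴ x`
and `defect A y`, and both telescope along products: `defect (A B) y = defect B y + defect A (B y)`.
Splitting `Ñ P̃ - N P = Ñ (P̃ - P) + (Ñ - N) P` therefore propagates through the product, without
loss, a bound in which the left defect of `N` is replaced by that of `Ñ`. The two left defects
agree up to a factor `1 + O(ε)`, because `‖(Ñ - N)ᴴ x‖²` is itself `O(ε)` times a defect. One more
such comparison, for the products, turns the one-sided bound back into an
`(ε + O(ε²))`-approximation.
-/

open Matrix ComplexOrder

/-- The ordered product `M_ℓ · M_{ℓ−1} ··· M₁` of a family `M : Fin ℓ → Matrix`, where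
`M i` plays the role of `M_{i+1}`. -/
noncomputable def orderedProd {n ℓ : ℕ} (M : Fin ℓ → Matrix (Fin n) (Fin n) ℂ) :
    Matrix (Fin n) (Fin n) ℂ :=
  (List.ofFn M).reverse.prod

namespace NSVApprox

variable {l m n : Type*} [Fintype l] [Fintype m] [Fintype n]

noncomputable def sqNorm (x : n → ℂ) : ℝ := (star x ⬝ᵥ x).re

lemma dotProduct_mulVec_adjoint (A : Matrix m n ℂ) (x : m → ℂ) (y : n → ℂ) :
    star x ⬝ᵥ (A *ᵥ y) = star (Aᴴ *ᵥ x) ⬝ᵥ y := by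
  rw [star_mulVec, conjTranspose_conjTranspose, dotProduct_mulVec]

lemma re_star_dotProduct_comm (x y : n → ℂ) : (star y ⬝ᵥ x).re = (star x ⬝ᵥ y).re := by
  rw [star_dotProduct, Complex.star_def, Complex.conj_re]

lemma star_dotProduct_self_eq (x : n → ℂ) : star x ⬝ᵥ x = (sqNorm x : ℂ) := by
  refine Complex.ext rfl ?_
  simp [dotProduct, Complex.im_sum, mul_comm]

lemma sqNorm_nonneg (x : n → ℂ) : 0 ≤ sqNorm x := by
  simpa [sqNorm] using Complex.re_le_re (dotProduct_star_self_nonneg x)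

lemma sqNorm_add (x y : n → ℂ) :
    sqNorm (x + y) = sqNorm x + sqNorm y + 2 * (star x ⬝ᵥ y).re := by
  simp only [sqNorm, star_add, add_dotProduct, dotProduct_add, Complex.add_re,
    re_star_dotProduct_comm x y]
  ring

lemma sqNorm_sub (x y : n → ℂ) :
    sqNorm (x - y) = sqNorm x + sqNorm y - 2 * (star x ⬝ᵥ y).re := by
  simp only [sqNorm, star_sub, sub_dotProduct, dotProduct_sub, Complex.sub_re,
    re_star_dotProduct_comm x y]
  ring

/-- `defect A y = ‖y‖² - ‖A y‖²`; the paper's forms `x*(I - A A*)x` and `y*(I - A* A)y` are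
`defect Aᴴ x` and `defect A y`. -/
noncomputable def defect (A : Matrix m n ℂ) (y : n → ℂ) : ℝ := sqNorm y - sqNorm (A *ᵥ y)

lemma star_dotProduct_one_sub_mulVec [DecidableEq n] (A : Matrix m n ℂ) (y : n → ℂ) :
    star y ⬝ᵥ ((1 - Aᴴ * A) *ᵥ y) = (defect A y : ℂ) := by
  rw [sub_mulVec, one_mulVec, dotProduct_sub, ← mulVec_mulVec, dotProduct_mulVec_adjoint,
    conjTranspose_conjTranspose, star_dotProduct_self_eq, star_dotProduct_self_eq, defect,
    Complex.ofReal_sub]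

lemma defect_one [DecidableEq n] (y : n → ℂ) : defect (1 : Matrix n n ℂ) y = 0 := by
  simp [defect]

lemma defect_mul (A : Matrix l m ℂ) (B : Matrix m n ℂ) (y : n → ℂ) :
    defect (A * B) y = defect B y + defect A (B *ᵥ y) := by
  simp only [defect, ← mulVec_mulVec]
  ring

lemma defect_le_sqNorm (A : Matrix m n ℂ) (y : n → ℂ) : defect A y ≤ sqNorm y :=
  sub_le_self _ (sqNorm_nonneg _)

lemma defect_mulVec_conjTranspose_le (A : Matrix m n ℂ) (x : m → ℂ) :
    defect A (Aᴴ *ᵥ x) ≤ defect Aᴴ x := by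
  have key := sqNorm_nonneg (x - A *ᵥ (Aᴴ *ᵥ x))
  rw [sqNorm_sub, dotProduct_mulVec_adjoint] at key
  simp only [defect, sqNorm] at key ⊢
  linarith

lemma defect_add_le (A : Matrix m n ℂ) {w d : n → ℂ} (h : 0 ≤ defect A (w - d)) :
    defect A (w + d) ≤ 2 * defect A w + 2 * defect A d := by
  simp only [defect, mulVec_add, mulVec_sub, sqNorm_add, sqNorm_sub] at h ⊢
  linarith

lemma defect_conjTranspose_sub (A Atil : Matrix m n ℂ) (x : m → ℂ) :
    defect Aᴴ x - defect Atilᴴ x =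
      (star x ⬝ᵥ ((Atil - A) *ᵥ (Atilᴴ *ᵥ x))).re + (star x ⬝ᵥ ((Atil - A) *ᵥ (Aᴴ *ᵥ x))).re := by
  rw [dotProduct_mulVec_adjoint (Atil - A), dotProduct_mulVec_adjoint (Atil - A),
    conjTranspose_sub, sub_mulVec, star_sub, sub_dotProduct, sub_dotProduct, Complex.sub_re,
    Complex.sub_re, re_star_dotProduct_comm (Atilᴴ *ᵥ x) (Aᴴ *ᵥ x)]
  simp only [defect, sqNorm]
  ring

section Perturbation

variable {A Atil : Matrix m n ℂ} {α β : ℝ} {M : (m → ℂ) → ℝ}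

lemma sqNorm_conjTranspose_sub_mulVec_le (hβ : 0 ≤ β)
    (hD : ∀ x y, ‖star x ⬝ᵥ ((Atil - A) *ᵥ y)‖ ≤ α * M x + β * defect A y) (x : m → ℂ) :
    (1 - β) * sqNorm ((Atil - A)ᴴ *ᵥ x) ≤ α * M x := by
  set d := (Atil - A)ᴴ *ᵥ x
  have hd : sqNorm d = (star x ⬝ᵥ ((Atil - A) *ᵥ d)).re := by
    rw [dotProduct_mulVec_adjoint]; rfl
  have hre := (Complex.re_le_norm _).trans (hD x d)
  have hdefect := mul_le_mul_of_nonneg_left (defect_le_sqNorm A d) hβ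
  linarith

lemma abs_defect_conjTranspose_sub_le (hβ : 0 ≤ β) (hA : ∀ y, 0 ≤ defect A y)
    (hD : ∀ x y, ‖star x ⬝ᵥ ((Atil - A) *ᵥ y)‖ ≤ α * M x + β * defect A y) (x : m → ℂ) :
    |defect Aᴴ x - defect Atilᴴ x| ≤
      2 * α * M x + β * (3 * defect Aᴴ x + 2 * sqNorm ((Atil - A)ᴴ *ᵥ x)) := by
  have hsplit : Atilᴴ *ᵥ x = Aᴴ *ᵥ x + (Atil - A)ᴴ *ᵥ x := by
    rw [conjTranspose_sub, sub_mulVec, add_sub_cancel]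
  have hAtil : defect A (Atilᴴ *ᵥ x) ≤
      2 * defect A (Aᴴ *ᵥ x) + 2 * defect A ((Atil - A)ᴴ *ᵥ x) :=
    hsplit ▸ defect_add_le A (hA _)
  have hadj := defect_mulVec_conjTranspose_le A x
  have hd := defect_le_sqNorm A ((Atil - A)ᴴ *ᵥ x)
  have hsum := mul_le_mul_of_nonneg_left (show defect A (Atilᴴ *ᵥ x) + defect A (Aᴴ *ᵥ x) ≤
    3 * defect Aᴴ x + 2 * sqNorm ((Atil - A)ᴴ *ᵥ x) by linarith) hβ
  have hreTil := (Complex.abs_re_le_norm _).trans (hD x (Atilᴴ *ᵥ x))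
  have hre := (Complex.abs_re_le_norm _).trans (hD x (Aᴴ *ᵥ x))
  rw [defect_conjTranspose_sub]
  refine (abs_add_le _ _).trans ?_
  linarith

end Perturbation

def IsContraction (A : Matrix m n ℂ) : Prop :=
  (∀ x, 0 ≤ defect Aᴴ x) ∧ ∀ y, 0 ≤ defect A y

lemma isContraction_one [DecidableEq n] : IsContraction (1 : Matrix n n ℂ) :=
  ⟨fun x => by rw [conjTranspose_one, defect_one], fun y => (defect_one y).ge⟩

lemma IsContraction.mul {A : Matrix l m ℂ} {B : Matrix m n ℂ} (hA : IsContraction A)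
    (hB : IsContraction B) : IsContraction (A * B) :=
  ⟨fun x => by rw [conjTranspose_mul, defect_mul]; exact add_nonneg (hA.1 x) (hB.1 _),
    fun y => by rw [defect_mul]; exact add_nonneg (hB.2 y) (hA.2 _)⟩

lemma isNSVApprox_iff [DecidableEq m] [DecidableEq n] {ε : ℝ} {A Atil : Matrix m n ℂ} :
    IsNSVApprox ε A Atil ↔ IsContraction A ∧
      ∀ x y, ‖star x ⬝ᵥ ((Atil - A) *ᵥ y)‖ ≤ ε / 4 * (defect Aᴴ x + defect A y) := by
  have hleft := star_dotProduct_one_sub_mulVec Aᴴ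
  have hright := star_dotProduct_one_sub_mulVec A
  rw [conjTranspose_conjTranspose] at hleft
  have hherm_left := isHermitian_one.sub (isHermitian_mul_conjTranspose_self A)
  have hherm_right := isHermitian_one.sub (isHermitian_conjTranspose_mul_self A)
  simp only [IsNSVApprox, IsContraction, posSemidef_iff_dotProduct_mulVec, hleft, hright,
    Complex.zero_le_real, Complex.ofReal_re, hherm_left, hherm_right, true_and, and_assoc]

lemma defect_conjTranspose_le_of_isNSVApprox [DecidableEq m] [DecidableEq n] {ε : ℝ}
    (hε : 0 ≤ ε) (hε' : ε ≤ 1 / 10) {A Atil : Matrix m n ℂ} (h : IsNSVApprox ε A Atil)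
    (x : m → ℂ) : defect Aᴴ x ≤ (1 + 2 * ε) * defect Atilᴴ x := by
  obtain ⟨hA, hD⟩ := isNSVApprox_iff.mp h
  have hD' : ∀ x y, ‖star x ⬝ᵥ ((Atil - A) *ᵥ y)‖ ≤
      ε / 4 * defect Aᴴ x + ε / 4 * defect A y := fun x y => (hD x y).trans_eq (mul_add _ _ _)
  have hd := sqNorm_conjTranspose_sub_mulVec_le (by positivity) hD' x
  have hgap := abs_defect_conjTranspose_sub_le (by positivity) hA.2 hD' x
  have hL := hA.1 x
  have hd0 := sqNorm_nonneg ((Atil - A)ᴴ *ᵥ x)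
  nlinarith [abs_le.mp hgap]

/-- The invariant carried along products. Replacing `defect Aᴴ` by the inflated
`(1 + 2ε) · defect Atilᴴ` (legitimate by `defect_conjTranspose_le_of_isNSVApprox`) makes both
defects telescope under multiplication (`defect_mul`), so the error does not accumulate. -/
def IsOneSidedApprox (ε : ℝ) (A Atil : Matrix m n ℂ) : Prop :=
  ∀ x y, ‖star x ⬝ᵥ ((Atil - A) *ᵥ y)‖ ≤ ε / 4 * ((1 + 2 * ε) * defect Atilᴴ x + defect A y)

lemma isOneSidedApprox_one [DecidableEq n] (ε : ℝ) :
    IsOneSidedApprox ε (1 : Matrix n n ℂ) 1 := fun x y => by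
  simp [conjTranspose_one, defect_one]

lemma defect_conjTranspose_le_of_isOneSidedApprox {ε : ℝ} (hε : 0 ≤ ε) (hε' : ε ≤ 1 / 10)
    {A Atil : Matrix m n ℂ} (hA : IsContraction A) (h : IsOneSidedApprox ε A Atil)
    (x : m → ℂ) : defect Atilᴴ x ≤ (1 + 2 * ε) * defect Aᴴ x := by
  have hD : ∀ x y, ‖star x ⬝ᵥ ((Atil - A) *ᵥ y)‖ ≤
      ε / 4 * (1 + 2 * ε) * defect Atilᴴ x + ε / 4 * defect A y :=
    fun x y => (h x y).trans_eq (by ring)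
  have hd := sqNorm_conjTranspose_sub_mulVec_le (by positivity) hD x
  have hgap := (le_abs_self _).trans <| abs_sub_comm (defect Atilᴴ x) _ ▸
    abs_defect_conjTranspose_sub_le (by positivity) hA.2 hD x
  have hL := hA.1 x
  -- eliminate `‖(Atil - A)ᴴ x‖²` between `hd` and `hgap`
  have hcT : (1 - 3 * ε / 4 - ε ^ 2) * defect Atilᴴ x ≤
      (1 - ε / 4) * (1 + 3 * ε / 4) * defect Aᴴ x := by
    have h1 := mul_le_mul_of_nonneg_left hgap (by linarith : (0:ℝ) ≤ 1 - ε / 4)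
    have h2 := mul_le_mul_of_nonneg_left hd (by linarith : (0:ℝ) ≤ ε / 2)
    linarith
  have hc : 0 < 1 - 3 * ε / 4 - ε ^ 2 := by nlinarith
  have hpoly : (1 - ε / 4) * (1 + 3 * ε / 4) ≤ (1 - 3 * ε / 4 - ε ^ 2) * (1 + 2 * ε) := by
    nlinarith [mul_nonneg hε (by nlinarith : (0:ℝ) ≤ 3 / 4 - 37 * ε / 16 - 2 * ε ^ 2)]
  by_contra! hT
  nlinarith [mul_lt_mul_of_pos_left hT hc]

lemma IsOneSidedApprox.mul [DecidableEq l] [DecidableEq m] {ε : ℝ} (hε : 0 ≤ ε)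
    (hε' : ε ≤ 1 / 10) {N Ntil : Matrix l m ℂ} {P Ptil : Matrix m n ℂ}
    (hN : IsNSVApprox ε N Ntil) (hP : IsOneSidedApprox ε P Ptil) :
    IsOneSidedApprox ε (N * P) (Ntil * Ptil) := by
  intro x y
  have hsplit : (Ntil * Ptil - N * P) *ᵥ y =
      Ntil *ᵥ ((Ptil - P) *ᵥ y) + (Ntil - N) *ᵥ (P *ᵥ y) := by
    simp only [sub_mulVec, mulVec_sub, ← mulVec_mulVec]
    abel
  have hfirst := hP (Ntilᴴ *ᵥ x) y
  have hsecond := (isNSVApprox_iff.mp hN).2 x (P *ᵥ y)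
  have hN' := mul_le_mul_of_nonneg_left (defect_conjTranspose_le_of_isNSVApprox hε hε' hN x)
    (by positivity : (0:ℝ) ≤ ε / 4)
  rw [hsplit, dotProduct_add, dotProduct_mulVec_adjoint Ntil, conjTranspose_mul, defect_mul,
    defect_mul]
  refine (norm_add_le _ _).trans ?_
  linarith

lemma IsOneSidedApprox.isNSVApprox [DecidableEq m] [DecidableEq n] {ε : ℝ} (hε : 0 ≤ ε)
    (hε' : ε ≤ 1 / 10) {A Atil : Matrix m n ℂ} (hA : IsContraction A)
    (h : IsOneSidedApprox ε A Atil) : IsNSVApprox (ε + 5 * ε ^ 2) A Atil := by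
  refine isNSVApprox_iff.mpr ⟨hA, fun x y => (h x y).trans ?_⟩
  have hT := mul_le_mul_of_nonneg_left
    (defect_conjTranspose_le_of_isOneSidedApprox hε hε' hA h x)
    (by positivity : (0:ℝ) ≤ ε / 4 * (1 + 2 * ε))
  have hL := hA.1 x
  have hR := hA.2 y
  nlinarith [mul_nonneg (mul_nonneg hε hε) hL, mul_nonneg (mul_nonneg hε hε) hR]

lemma orderedProd_succ {n ℓ : ℕ} (M : Fin (ℓ + 1) → Matrix (Fin n) (Fin n) ℂ) :
    orderedProd M = M (Fin.last ℓ) * orderedProd fun i => M i.castSucc := by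
  rw [orderedProd, orderedProd, List.ofFn_succ', List.concat_eq_append, List.reverse_concat',
    List.prod_cons]

lemma isContraction_orderedProd {n ℓ : ℕ} {N : Fin ℓ → Matrix (Fin n) (Fin n) ℂ}
    (h : ∀ i, IsContraction (N i)) : IsContraction (orderedProd N) := by
  induction ℓ with
  | zero => simpa [orderedProd] using isContraction_one
  | succ ℓ ih => rw [orderedProd_succ]; exact (h _).mul (ih fun _ => h _)

lemma isOneSidedApprox_orderedProd {n ℓ : ℕ} {ε : ℝ} (hε : 0 ≤ ε) (hε' : ε ≤ 1 / 10)
    {N Ntil : Fin ℓ → Matrix (Fin n) (Fin n) ℂ} (h : ∀ i, IsNSVApprox ε (N i) (Ntil i)) :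
    IsOneSidedApprox ε (orderedProd N) (orderedProd Ntil) := by
  induction ℓ with
  | zero => simpa [orderedProd] using isOneSidedApprox_one ε
  | succ ℓ ih =>
    rw [orderedProd_succ, orderedProd_succ]
    exact IsOneSidedApprox.mul hε hε' (h _) (ih fun _ => h _)

end NSVApprox

/-- there are constants `C > 0` and `ε₀ ∈ (0,1]` such that normalized-SV
approximation is preserved under arbitrary products, with error degrading from `ε`
only to `ε + C·ε²`. -/
theorem stmt_9 :
    ∃ C : ℝ, 0 < C ∧ ∃ ε₀ : ℝ, 0 < ε₀ ∧ ε₀ ≤ 1 ∧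
      ∀ (n : ℕ), 1 ≤ n → ∀ (ℓ : ℕ), 1 ≤ ℓ → ∀ (ε : ℝ), 0 ≤ ε → ε ≤ ε₀ →
        ∀ (N Ntil : Fin ℓ → Matrix (Fin n) (Fin n) ℂ),
          (∀ i, IsNSVApprox ε (N i) (Ntil i)) →
          IsNSVApprox (ε + C * ε ^ 2) (orderedProd N) (orderedProd Ntil) := by
  refine ⟨5, by norm_num, 1 / 10, by norm_num, by norm_num, ?_⟩
  intro n _ ℓ _ ε hε hε' N Ntil h
  have hP := NSVApprox.isContraction_orderedProd fun i => (NSVApprox.isNSVApprox_iff.mp (h i)).1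
  exact (NSVApprox.isOneSidedApprox_orderedProd hε hε' h).isNSVApprox hε hε' hP
end

section
/- For every α ∈ (0,1) and every ε ∈ (0,1), there exist symmetric matrices W, W̃ ∈ ℝ^{2×2} such that I − W·Wᵀ and I − W̃·W̃ᵀ are positive semidefinite (i.e. both have spectral norm at most 1), W̃ is a unit-circle ε-approximation of W with respect to degree matrix I, and yet for every ε′ ≥ 0 for which W̃ is an ε′-normalized-SV approximation of W, one has ε′ ≥ ε/√(1 − α²). (Explicitly, one may take W = diag(α, −α) and W̃ with diagonal entries α, −α and off-diagonal entries ε·√(1 − α²).) -/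
open Matrix ComplexOrder

/-- `Ã` is a unit-circle `ε`-approximation of `A` with respect to the degree matrix `I`:
for every unimodular `z`, `z·Ã` is a standard `ε`-approximation of `z·A` w.r.t. `I`. -/
noncomputable def IsUCApproxId {n : ℕ} (ε : ℝ) (A Atil : Matrix (Fin n) (Fin n) ℂ) : Prop :=
  ∀ z : ℂ, ‖z‖ = 1 →
    ((1 : Matrix (Fin n) (Fin n) ℂ) - symPart (z • A)).PosSemidef ∧
    ∀ x y : Fin n → ℂ,
      ‖star x ⬝ᵥ (z • Atil - z • A).mulVec y‖ ≤
        ε / 2 *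
          ((star x ⬝ᵥ ((1 : Matrix (Fin n) (Fin n) ℂ) - symPart (z • A)).mulVec x).re +
           (star y ⬝ᵥ ((1 : Matrix (Fin n) (Fin n) ℂ) - symPart (z • A)).mulVec y).re)

/-!
Take `W = diag(α, -α)` and `W̃ = W + c·J` with `J` the coordinate swap and `c = ε √(1 - α²)`.
For `|z| = 1` and `t = Re z` the unit-circle degree matrix is `I - t W = diag(1 - tα, 1 + tα)`,
whose determinant `1 - t²α² ≥ 1 - α²` lets AM-GM absorb the error `c (x̄₀ y₁ + x̄₁ y₀)` with
constant `ε`. The normalized-SV degree matrices are both `(1 - α²) I`, so testing on `e₀, e₁`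
gives `2c ≤ ε' (1 - α²)`, i.e. `ε' ≥ 2ε / √(1 - α²)`.
-/

theorem two_mul_mul_le_of_sq_le_mul {P Q s a b : ℝ} (hP : 0 ≤ P) (hQ : 0 ≤ Q)
    (h : s ^ 2 ≤ P * Q) : 2 * s * (a * b) ≤ P * a ^ 2 + Q * b ^ 2 := by
  have hPmul : 0 ≤ P * (P * a ^ 2 + Q * b ^ 2 - 2 * s * (a * b)) := by
    nlinarith [sq_nonneg (P * a - s * b), mul_le_mul_of_nonneg_left h (sq_nonneg b)]
  have hQmul : 0 ≤ Q * (P * a ^ 2 + Q * b ^ 2 - 2 * s * (a * b)) := by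
    nlinarith [sq_nonneg (Q * b - s * a), mul_le_mul_of_nonneg_left h (sq_nonneg a)]
  rcases (add_nonneg hP hQ).eq_or_lt with h0 | h0
  · have hP0 : P = 0 := by linarith
    have hQ0 : Q = 0 := by linarith
    subst hP0 hQ0
    have : s = 0 := by nlinarith [sq_nonneg s]
    simp [this]
  · nlinarith

theorem symPart_smul_map_ofReal {n : ℕ} (A : Matrix (Fin n) (Fin n) ℝ) (hA : Aᵀ = A) (z : ℂ) :
    symPart (z • A.map (↑)) = (z.re : ℂ) • A.map (↑) := by
  ext i j
  have : A j i = A i j := congrFun (congrFun hA i) j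
  simp only [symPart, conjTranspose_smul, RCLike.star_def, Matrix.smul_apply, Matrix.add_apply,
    map_apply, smul_eq_mul, conjTranspose_apply, this, Complex.conj_ofReal, Complex.re_eq_add_conj]
  ring

theorem re_star_dotProduct_diagonal_mulVec {ι : Type*} [Fintype ι] [DecidableEq ι] (d : ι → ℝ)
    (v : ι → ℂ) :
    (star v ⬝ᵥ (diagonal fun i => (d i : ℂ)) *ᵥ v).re = ∑ i, d i * ‖v i‖ ^ 2 := by
  simp only [dotProduct, Pi.star_apply, RCLike.star_def, mulVec_diagonal, Complex.re_sum,
    Complex.mul_re, Complex.conj_re, Complex.ofReal_re, Complex.ofReal_im, Complex.conj_im,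
    Complex.mul_im, Complex.sq_norm, Complex.normSq_apply]
  refine Finset.sum_congr rfl fun i _ => ?_
  ring

def tracelessSymm (α c : ℝ) : Matrix (Fin 2) (Fin 2) ℝ := !![α, c; c, -α]

section tracelessSymm

variable (α c : ℝ)

theorem tracelessSymm_transpose : (tracelessSymm α c)ᵀ = tracelessSymm α c := by
  ext i j; fin_cases i <;> fin_cases j <;> rfl

theorem tracelessSymm_mul_self : tracelessSymm α c * tracelessSymm α c = (α ^ 2 + c ^ 2) • 1 := by
  ext i j
  fin_cases i <;> fin_cases j <;> simp [tracelessSymm, one_apply] <;> ring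

variable {α c}

theorem posSemidef_one_sub_tracelessSymm_mul_transpose (h : α ^ 2 + c ^ 2 ≤ 1) :
    (1 - tracelessSymm α c * (tracelessSymm α c)ᵀ).PosSemidef := by
  rw [tracelessSymm_transpose, tracelessSymm_mul_self, ← one_smul ℝ (1 : Matrix _ _ ℝ),
    smul_smul, mul_one, ← sub_smul]
  exact PosSemidef.one.smul (sub_nonneg.mpr h)

theorem one_sub_symPart_smul_tracelessSymm_zero (z : ℂ) :
    1 - symPart (z • (tracelessSymm α 0).map (↑)) =
      diagonal fun i => ((![1 - z.re * α, 1 + z.re * α] i : ℝ) : ℂ) := by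
  rw [symPart_smul_map_ofReal _ (tracelessSymm_transpose α 0)]
  ext i j; fin_cases i <;> fin_cases j <;> simp [tracelessSymm]

theorem star_dotProduct_smul_tracelessSymm_sub_mulVec (z : ℂ) (x y : Fin 2 → ℂ) :
    star x ⬝ᵥ (z • (tracelessSymm α c).map (↑) - z • (tracelessSymm α 0).map (↑)) *ᵥ y =
      z * c * (star (x 0) * y 1 + star (x 1) * y 0) := by
  simp only [dotProduct, Pi.star_apply, RCLike.star_def, mulVec, tracelessSymm, Matrix.sub_apply,
    Matrix.smul_apply, map_apply, of_apply, cons_val', cons_val_fin_one, smul_eq_mul,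
    Fin.sum_univ_two, cons_val_zero, cons_val_one, Complex.ofReal_zero, Complex.ofReal_neg]
  ring

theorem two_mul_abs_le_of_isNSVApprox_tracelessSymm {ε' : ℝ}
    (h : IsNSVApprox ε' ((tracelessSymm α 0).map (↑)) ((tracelessSymm α c).map (↑))) :
    2 * |c| ≤ ε' * (1 - α ^ 2) := by
  have key : |c| ≤ ε' / 4 * (2 * (1 - α ^ 2)) := by
    convert h.2.2 (Pi.single 0 1) (Pi.single 1 1) using 2
    · simp [tracelessSymm, mulVec, dotProduct, Fin.sum_univ_two]
    · simp [tracelessSymm, mulVec, dotProduct, Fin.sum_univ_two, Matrix.mul_apply, two_mul, sq,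
        sub_eq_add_neg]
  linarith

theorem isUCApproxId_tracelessSymm {ε : ℝ} (hα : α ^ 2 ≤ 1) (hε : 0 ≤ ε)
    (hc : c ^ 2 ≤ ε ^ 2 * (1 - α ^ 2)) :
    IsUCApproxId ε ((tracelessSymm α 0).map (↑)) ((tracelessSymm α c).map (↑)) := by
  intro z hz
  set t := z.re
  have ht : t ^ 2 ≤ 1 := by
    simpa [hz] using sq_le_sq' (neg_le_of_abs_le (Complex.abs_re_le_norm z)) (Complex.re_le_norm z)
  have hP : 0 ≤ 1 - t * α := by nlinarith
  have hQ : 0 ≤ 1 + t * α := by nlinarith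
  rw [one_sub_symPart_smul_tracelessSymm_zero]
  refine ⟨posSemidef_diagonal_iff.mpr fun i => ?_, fun x y => ?_⟩
  · fin_cases i
    exacts [Complex.zero_le_real.mpr hP, Complex.zero_le_real.mpr hQ]
  have hxy : ‖star (x 0) * y 1 + star (x 1) * y 0‖ ≤ ‖x 0‖ * ‖y 1‖ + ‖x 1‖ * ‖y 0‖ := by
    simpa using norm_add_le (star (x 0) * y 1) (star (x 1) * y 0)
  have hPQ : |c| ^ 2 ≤ ε * (1 - t * α) * (ε * (1 + t * α)) := by
    rw [sq_abs]
    nlinarith [mul_le_mul_of_nonneg_left (mul_le_of_le_one_left (sq_nonneg α) ht) (sq_nonneg ε)]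
  have hx0y1 := two_mul_mul_le_of_sq_le_mul (a := ‖x 0‖) (b := ‖y 1‖) (by positivity)
    (by positivity) hPQ
  have hx1y0 := two_mul_mul_le_of_sq_le_mul (a := ‖x 1‖) (b := ‖y 0‖) (by positivity)
    (by positivity) (hPQ.trans_eq (mul_comm _ _))
  rw [star_dotProduct_smul_tracelessSymm_sub_mulVec, re_star_dotProduct_diagonal_mulVec,
    re_star_dotProduct_diagonal_mulVec, norm_mul, norm_mul, hz, Complex.norm_real, Real.norm_eq_abs]
  simp only [Fin.sum_univ_two, Matrix.cons_val_zero, Matrix.cons_val_one]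
  nlinarith [mul_le_mul_of_nonneg_left hxy (abs_nonneg c)]

end tracelessSymm

/-- unit-circle approximation can be separated arbitrarily from
normalized-SV approximation, already for symmetric `2×2` real matrices of spectral norm
at most `1`. -/
theorem stmt_10 (α ε : ℝ) (hα : 0 < α) (hα1 : α < 1) (hε : 0 < ε) (hε1 : ε < 1) :
    ∃ W Wtil : Matrix (Fin 2) (Fin 2) ℝ,
      Wᵀ = W ∧ Wtilᵀ = Wtil ∧
      ((1 : Matrix (Fin 2) (Fin 2) ℝ) - W * Wᵀ).PosSemidef ∧
      ((1 : Matrix (Fin 2) (Fin 2) ℝ) - Wtil * Wtilᵀ).PosSemidef ∧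
      IsUCApproxId ε (W.map fun a => (a : ℂ)) (Wtil.map fun a => (a : ℂ)) ∧
      ∀ ε' : ℝ, 0 ≤ ε' →
        IsNSVApprox ε' (W.map fun a => (a : ℂ)) (Wtil.map fun a => (a : ℂ)) →
        ε / Real.sqrt (1 - α ^ 2) ≤ ε' := by
  have hα2 : 0 < 1 - α ^ 2 := by nlinarith
  set s := Real.sqrt (1 - α ^ 2)
  have hs0 : 0 < s := Real.sqrt_pos.mpr hα2
  have hs2 : s ^ 2 = 1 - α ^ 2 := Real.sq_sqrt hα2.le
  have hc : (ε * s) ^ 2 = ε ^ 2 * (1 - α ^ 2) := by rw [mul_pow, hs2]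
  have hε2 : ε ^ 2 ≤ 1 := pow_le_one₀ hε.le hε1.le
  refine ⟨tracelessSymm α 0, tracelessSymm α (ε * s), tracelessSymm_transpose α 0,
    tracelessSymm_transpose α (ε * s), posSemidef_one_sub_tracelessSymm_mul_transpose (by linarith),
    posSemidef_one_sub_tracelessSymm_mul_transpose
      (by rw [hc]; nlinarith [mul_le_mul_of_nonneg_right hε2 hα2.le]),
    isUCApproxId_tracelessSymm (by linarith) hε.le hc.le, fun ε' _ hNSV => ?_⟩
  have hbound := two_mul_abs_le_of_isNSVApprox_tracelessSymm hNSV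
  rw [abs_of_pos (mul_pos hε hs0), ← hs2] at hbound
  rw [div_le_iff₀ hs0]
  nlinarith
end

section
/- Let n ≥ 1 and let W, W̃ ∈ ℝ^{n×n} be doubly stochastic matrices such that W̃ is an ε-normalized-SV approximation of W. Then for all subsets S, T ⊆ {1,…,n}: |Cut_{W̃}(S,T) − Cut_W(S,T)| ≤ (ε/2)·√(Cut_{WᵀW}(S) · Cut_{WWᵀ}(T)). -/
/-!
Test the approximation on `x = √s · 1_T` and `y = 1_S / √s`. The bilinear form
`x*(W̃ - W)y` is `n` times the difference of the cuts, independently of `s`. Since `WWᵀ` and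
`WᵀW` are again doubly stochastic, `1_Tᵀ (I - WWᵀ) 1_T` is the mass that `WWᵀ` moves out
of `T`, i.e. `n · Cut_{WWᵀ}(T)`, and likewise for `S`. This bounds the cut difference by
`(ε/4)(s · Cut_{WWᵀ}(T) + s⁻¹ · Cut_{WᵀW}(S))` for every `s > 0`, and the infimum over `s`
is the geometric mean.
-/

open Matrix ComplexOrder

/-- `Cut_M(S,T) := (1/n)·∑_{i∈S}∑_{j∈T} M_{j i}`. -/
noncomputable def cut {n : ℕ} (M : Matrix (Fin n) (Fin n) ℝ) (S T : Finset (Fin n)) : ℝ :=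
  (n : ℝ)⁻¹ * ∑ i ∈ S, ∑ j ∈ T, M j i

open Filter Topology

theorem le_two_mul_sqrt_of_forall_le {a b c d : ℝ} (ha : 0 ≤ a) (hb : 0 ≤ b) (hc : 0 ≤ c)
    (h : ∀ s : ℝ, 0 < s → d ≤ c * (s * a + s⁻¹ * b)) : d ≤ 2 * c * √(a * b) := by
  -- With `p = √a + η`, `q = √b + η` and `s = q / p` both terms equal `p q`; the shift
  -- `η > 0` keeps `s` defined when `a = 0`, and is removed by letting `η → 0`.
  have hη : ∀ η : ℝ, 0 < η → d ≤ 2 * c * ((√a + η) * (√b + η)) := by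
    intro η hη
    have hp : 0 < √a + η := by positivity
    have hq : 0 < √b + η := by positivity
    have hap : a ≤ (√a + η) ^ 2 := by nlinarith [Real.sq_sqrt ha, Real.sqrt_nonneg a]
    have hbq : b ≤ (√b + η) ^ 2 := by nlinarith [Real.sq_sqrt hb, Real.sqrt_nonneg b]
    set s := (√b + η) / (√a + η)
    calc d ≤ c * (s * a + s⁻¹ * b) := h s (by positivity)
      _ ≤ c * (s * (√a + η) ^ 2 + s⁻¹ * (√b + η) ^ 2) := by gcongr
      _ = 2 * c * ((√a + η) * (√b + η)) := by
        simp only [s, inv_div]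
        field_simp
        ring
  have hcont : Continuous fun η : ℝ => 2 * c * ((√a + η) * (√b + η)) := by fun_prop
  have hlim := (hcont.tendsto 0).mono_left (nhdsWithin_le_nhds (s := Set.Ioi 0))
  rw [add_zero, add_zero, ← Real.sqrt_mul ha] at hlim
  exact ge_of_tendsto hlim (eventually_nhdsWithin_of_forall hη)

theorem dotProduct_mulVec_ite_mem {R α β : Type*} [CommSemiring R] [Fintype α] [Fintype β]
    [DecidableEq α] [DecidableEq β] (M : Matrix α β R) (T : Finset α) (S : Finset β)
    (a b : R) :
    (fun i => if i ∈ T then a else 0) ⬝ᵥ M *ᵥ (fun j => if j ∈ S then b else 0) =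
      a * b * ∑ i ∈ T, ∑ j ∈ S, M i j := by
  simp only [dotProduct, mulVec, mul_ite, mul_zero, Finset.sum_ite_mem, Finset.univ_inter,
    Finset.mul_sum, ite_mul, zero_mul, Finset.sum_ite_irrel, Finset.sum_const_zero]
  exact Finset.sum_congr rfl fun i _ => Finset.sum_congr rfl fun j _ => by ring

theorem star_ofReal_dotProduct_mulVec {α β : Type*} [Fintype α] [Fintype β]
    (M : Matrix α β ℝ) (x : α → ℝ) (y : β → ℝ) :
    star (fun i => (x i : ℂ)) ⬝ᵥ (M.map fun a => (a : ℂ)) *ᵥ (fun j => (y j : ℂ)) =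
      ((x ⬝ᵥ M *ᵥ y : ℝ) : ℂ) := by
  simp [dotProduct, mulVec, Complex.conj_ofReal]

section NSVApprox

variable {α β : Type*} [Fintype α] [Fintype β] [DecidableEq α] [DecidableEq β] {ε : ℝ}
  {A Atil : Matrix α β ℝ}

theorem IsNSVApprox.abs_dotProduct_mulVec_le
    (h : IsNSVApprox ε (A.map fun a => (a : ℂ)) (Atil.map fun a => (a : ℂ)))
    (x : α → ℝ) (y : β → ℝ) :
    |x ⬝ᵥ (Atil - A) *ᵥ y| ≤
      ε / 4 * (x ⬝ᵥ (1 - A * Aᵀ) *ᵥ x + y ⬝ᵥ (1 - Aᵀ * A) *ᵥ y) := by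
  have hsub : (Atil.map fun a => (a : ℂ)) - A.map (fun a => (a : ℂ)) =
      (Atil - A).map fun a => (a : ℂ) := by
    ext; simp
  have hleft : 1 - (A.map fun a => (a : ℂ)) * (A.map fun a => (a : ℂ))ᴴ =
      (1 - A * Aᵀ).map fun a => (a : ℂ) := by
    ext; simp [mul_apply, one_apply, apply_ite]
  have hright : 1 - (A.map fun a => (a : ℂ))ᴴ * (A.map fun a => (a : ℂ)) =
      (1 - Aᵀ * A).map fun a => (a : ℂ) := by
    ext; simp [mul_apply, one_apply, apply_ite]
  have := h.2.2 (fun i => (x i : ℂ)) (fun j => (y j : ℂ))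
  rwa [hsub, hleft, hright, star_ofReal_dotProduct_mulVec, star_ofReal_dotProduct_mulVec,
    star_ofReal_dotProduct_mulVec, Complex.norm_real, Real.norm_eq_abs, Complex.ofReal_re,
    Complex.ofReal_re] at this

theorem IsNSVApprox.abs_sum_sum_sub_le
    (h : IsNSVApprox ε (A.map fun a => (a : ℂ)) (Atil.map fun a => (a : ℂ)))
    (T : Finset α) (S : Finset β) {s : ℝ} (hs : 0 < s) :
    |∑ i ∈ T, ∑ j ∈ S, (Atil - A) i j| ≤
      ε / 4 * (s * ∑ i ∈ T, ∑ j ∈ T, (1 - A * Aᵀ : Matrix α α ℝ) i j +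
        s⁻¹ * ∑ i ∈ S, ∑ j ∈ S, (1 - Aᵀ * A : Matrix β β ℝ) i j) := by
  have := h.abs_dotProduct_mulVec_le (fun i => if i ∈ T then √s else 0)
    (fun j => if j ∈ S then (√s)⁻¹ else 0)
  rwa [dotProduct_mulVec_ite_mem, dotProduct_mulVec_ite_mem, dotProduct_mulVec_ite_mem,
    mul_inv_cancel₀ (by positivity), one_mul, Real.mul_self_sqrt hs.le, ← mul_inv,
    Real.mul_self_sqrt hs.le] at this

end NSVApprox

section Cut

variable {n : ℕ}

theorem cut_sub_cut (M N : Matrix (Fin n) (Fin n) ℝ) (S T : Finset (Fin n)) :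
    cut M S T - cut N S T = (n : ℝ)⁻¹ * ∑ j ∈ T, ∑ i ∈ S, (M - N) j i := by
  simp only [cut, ← mul_sub, ← Finset.sum_sub_distrib, Matrix.sub_apply]
  rw [Finset.sum_comm]

theorem cut_nonneg {M : Matrix (Fin n) (Fin n) ℝ} (hM : ∀ i j, 0 ≤ M i j)
    (S T : Finset (Fin n)) : 0 ≤ cut M S T :=
  mul_nonneg (by positivity) (Finset.sum_nonneg fun i _ => Finset.sum_nonneg fun j _ => hM j i)

theorem cut_compl_eq {M : Matrix (Fin n) (Fin n) ℝ} (hM : ∀ j, ∑ i, M i j = 1)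
    (T : Finset (Fin n)) :
    cut M T Tᶜ = (n : ℝ)⁻¹ * ∑ i ∈ T, ∑ j ∈ T, (1 - M : Matrix (Fin n) (Fin n) ℝ) i j := by
  have hcol : ∀ i ∈ T,
      ∑ j ∈ Tᶜ, M j i = ∑ j ∈ T, (1 - M : Matrix (Fin n) (Fin n) ℝ) j i := by
    intro i hi
    have hsum := hM i
    rw [← Finset.sum_compl_add_sum T] at hsum
    simp only [Matrix.sub_apply, one_apply, Finset.sum_sub_distrib, Finset.sum_ite_eq', hi,
      ↓reduceIte]
    linarith
  rw [cut, Finset.sum_congr rfl hcol, Finset.sum_comm]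

end Cut

theorem stmt_11_general {n : ℕ} (W Wtil : Matrix (Fin n) (Fin n) ℝ)
    (hWnonneg : ∀ i j, 0 ≤ W i j)
    (hWrow : ∀ i, ∑ j, W i j = 1) (hWcol : ∀ j, ∑ i, W i j = 1)
    (ε : ℝ) (hε : 0 ≤ ε)
    (hNSV : IsNSVApprox ε (W.map fun a => (a : ℂ)) (Wtil.map fun a => (a : ℂ))) :
    ∀ S T : Finset (Fin n),
      |cut Wtil S T - cut W S T| ≤
        ε / 2 * Real.sqrt (cut (Wᵀ * W) S Sᶜ * cut (W * Wᵀ) T Tᶜ) := by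
  intro S T
  have hW : W ∈ doublyStochastic ℝ (Fin n) :=
    mem_doublyStochastic_iff_sum.2 ⟨hWnonneg, hWrow, hWcol⟩
  have hWt : Wᵀ ∈ doublyStochastic ℝ (Fin n) := transpose_mem_doublyStochastic_iff.2 hW
  have hWWt := mul_mem hW hWt
  have hWtW := mul_mem hWt hW
  rw [mul_comm (cut (Wᵀ * W) S Sᶜ), show ε / 2 = 2 * (ε / 4) by ring]
  refine le_two_mul_sqrt_of_forall_le
    (cut_nonneg (fun _ _ => nonneg_of_mem_doublyStochastic hWWt) _ _)
    (cut_nonneg (fun _ _ => nonneg_of_mem_doublyStochastic hWtW) _ _) (by positivity)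
    fun s hs => ?_
  rw [cut_sub_cut, cut_compl_eq (sum_col_of_mem_doublyStochastic hWWt),
    cut_compl_eq (sum_col_of_mem_doublyStochastic hWtW), abs_mul, abs_inv, Nat.abs_cast]
  calc (n : ℝ)⁻¹ * |∑ j ∈ T, ∑ i ∈ S, (Wtil - W) j i|
      ≤ (n : ℝ)⁻¹ * (ε / 4 * (s * ∑ i ∈ T, ∑ j ∈ T, (1 - W * Wᵀ : Matrix (Fin n) (Fin n) ℝ) i j
          + s⁻¹ * ∑ i ∈ S, ∑ j ∈ S, (1 - Wᵀ * W : Matrix (Fin n) (Fin n) ℝ) i j)) := by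
        gcongr
        exact hNSV.abs_sum_sum_sub_le T S hs
    _ = _ := by ring

/-- a normalized-SV approximation between doubly stochastic matrices
approximates all cut values `Cut(S,T)`, with error controlled by the cut values of the
forward-backward and backward-forward walks. -/
theorem stmt_11 {n : ℕ} (hn : 1 ≤ n) (W Wtil : Matrix (Fin n) (Fin n) ℝ)
    (hWnonneg : ∀ i j, 0 ≤ W i j)
    (hWrow : ∀ i, ∑ j, W i j = 1) (hWcol : ∀ j, ∑ i, W i j = 1)
    (hWtilnonneg : ∀ i j, 0 ≤ Wtil i j)
    (hWtilrow : ∀ i, ∑ j, Wtil i j = 1) (hWtilcol : ∀ j, ∑ i, Wtil i j = 1)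
    (ε : ℝ) (hε : 0 ≤ ε)
    (hNSV : IsNSVApprox ε (W.map fun a => (a : ℂ)) (Wtil.map fun a => (a : ℂ))) :
    ∀ S T : Finset (Fin n),
      |cut Wtil S T - cut W S T| ≤
        ε / 2 * Real.sqrt (cut (Wᵀ * W) S Sᶜ * cut (W * Wᵀ) T Tᶜ) :=
  stmt_11_general W Wtil hWnonneg hWrow hWcol ε hε hNSV
end

section
/- Let A₁, A₂, A₃ ∈ ℂ^{m×n} and δ, ε ≥ 0. If A₃ is a δ-normalized-SV approximation of A₂ and A₂ is an ε-normalized-SV approximation of A₁, then A₃ is an (ε + δ + ε·δ)-normalized-SV approximation of A₁. Moreover, for every δ ∈ (0, 1/2) and every ℓ ≥ 1: if A₀, A₁, …, A_ℓ ∈ ℂ^{m×n} satisfy that Aᵢ is a (δ/(2ℓ))-normalized-SV approximation of A_{i−1} for every i ∈ {1,…,ℓ}, then A_ℓ is a δ-normalized-SV approximation of A₀. -/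
/-!
If `Ã = A + E`, then `x*(1 - ÃÃ*)x = x*(1 - AA*)x - 2 Re x*E(A*x) - ‖E*x‖²`. The cross term is
bounded by the approximation inequality at `y = A*x`, and `(A*x)*(1 - A*A)(A*x) ≤ x*(1 - AA*)x`
(the difference is `‖(1 - AA*)x‖²`), so `x*(1 - ÃÃ*)x ≤ (1 + ε) x*(1 - AA*)x`, and symmetrically
on the right. Splitting `A₃ - A₁ = (A₃ - A₂) + (A₂ - A₁)` then gives the approximate triangle
inequality. Along a chain of `s`-approximations the errors compose to `(1 + s)^ℓ - 1`, and
`(1 + s)^ℓ ≤ 1 + 2ℓs` when `2ℓs ≤ 1`.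
-/

open Matrix ComplexOrder

namespace Matrix

variable {α β : Type*} [Fintype α] [Fintype β]

noncomputable def hermForm (M : Matrix α α ℂ) (x : α → ℂ) : ℝ := (star x ⬝ᵥ M *ᵥ x).re

@[simp]
lemma hermForm_add (M N : Matrix α α ℂ) (x : α → ℂ) :
    hermForm (M + N) x = hermForm M x + hermForm N x := by
  simp [hermForm, add_mulVec, dotProduct_add]

@[simp]
lemma hermForm_sub (M N : Matrix α α ℂ) (x : α → ℂ) :
    hermForm (M - N) x = hermForm M x - hermForm N x := by
  simp [hermForm, sub_mulVec, dotProduct_sub]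

lemma star_dotProduct_conjTranspose_mulVec (M : Matrix α β ℂ) (x : α → ℂ) (y : β → ℂ) :
    star y ⬝ᵥ Mᴴ *ᵥ x = star (star x ⬝ᵥ M *ᵥ y) := by
  rw [dotProduct_mulVec, ← star_mulVec, star_dotProduct]

@[simp]
lemma hermForm_conjTranspose (M : Matrix α α ℂ) (x : α → ℂ) :
    hermForm Mᴴ x = hermForm M x := by
  rw [hermForm, star_dotProduct_conjTranspose_mulVec, Complex.star_def, Complex.conj_re, hermForm]

lemma hermForm_mul_mul_conjTranspose (N : Matrix α β ℂ) (M : Matrix β β ℂ) (x : α → ℂ) :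
    hermForm (N * M * Nᴴ) x = hermForm M (Nᴴ *ᵥ x) := by
  rw [hermForm, hermForm, ← mulVec_mulVec, ← mulVec_mulVec, dotProduct_mulVec, star_mulVec,
    conjTranspose_conjTranspose]

lemma hermForm_mul_conjTranspose (E N : Matrix α β ℂ) (x : α → ℂ) :
    hermForm (E * Nᴴ) x = (star x ⬝ᵥ E *ᵥ (Nᴴ *ᵥ x)).re := by
  rw [hermForm, mulVec_mulVec]

lemma PosSemidef.hermForm_nonneg {M : Matrix α α ℂ} (hM : M.PosSemidef) (x : α → ℂ) :
    0 ≤ hermForm M x :=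
  hM.re_dotProduct_nonneg x

lemma hermForm_one_sub_conjTranspose_mul_mulVec_le [DecidableEq α] [DecidableEq β]
    (A : Matrix α β ℂ) (x : α → ℂ) :
    hermForm (1 - Aᴴ * A) (Aᴴ *ᵥ x) ≤ hermForm (1 - A * Aᴴ) x := by
  have hsq : (1 - A * Aᴴ) - A * (1 - Aᴴ * A) * Aᴴ = (1 - A * Aᴴ)ᴴ * (1 - A * Aᴴ) := by
    simp only [conjTranspose_sub, conjTranspose_one, conjTranspose_mul, conjTranspose_conjTranspose,
      Matrix.mul_sub, Matrix.sub_mul, Matrix.mul_one, Matrix.one_mul, Matrix.mul_assoc]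
  have := (posSemidef_conjTranspose_mul_self (1 - A * Aᴴ)).hermForm_nonneg x
  rw [← hsq, hermForm_sub, hermForm_mul_mul_conjTranspose] at this
  linarith

end Matrix

namespace IsNSVApprox

variable {α β : Type*} [Fintype α] [Fintype β] [DecidableEq α] [DecidableEq β]
  {ε δ : ℝ} {A B C : Matrix α β ℂ}

lemma of_norm_le (hA : (1 - A * Aᴴ).PosSemidef) (hA' : (1 - Aᴴ * A).PosSemidef)
    (h : ∀ x y, ‖star x ⬝ᵥ (B - A) *ᵥ y‖ ≤
      ε / 4 * (hermForm (1 - A * Aᴴ) x + hermForm (1 - Aᴴ * A) y)) :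
    IsNSVApprox ε A B :=
  ⟨hA, hA', h⟩

lemma zero_self (h : IsNSVApprox ε A B) : IsNSVApprox 0 A A :=
  of_norm_le h.1 h.2.1 fun x y => by simp

lemma norm_le (h : IsNSVApprox ε A B) (x : α → ℂ) (y : β → ℂ) :
    ‖star x ⬝ᵥ (B - A) *ᵥ y‖ ≤ ε / 4 * (hermForm (1 - A * Aᴴ) x + hermForm (1 - Aᴴ * A) y) :=
  h.2.2 x y

lemma conjTranspose (h : IsNSVApprox ε A B) : IsNSVApprox ε Aᴴ Bᴴ := by
  refine of_norm_le (by simpa using h.2.1) (by simpa using h.1) fun y x => ?_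
  rw [← conjTranspose_sub, star_dotProduct_conjTranspose_mulVec, norm_star,
    conjTranspose_conjTranspose, add_comm]
  exact h.norm_le x y

lemma hermForm_one_sub_mul_conjTranspose_le (hε : 0 ≤ ε) (h : IsNSVApprox ε A B) (x : α → ℂ) :
    hermForm (1 - B * Bᴴ) x ≤ (1 + ε) * hermForm (1 - A * Aᴴ) x := by
  set E := B - A
  have hsplit : 1 - B * Bᴴ = (1 - A * Aᴴ) - (E * Aᴴ + (E * Aᴴ)ᴴ) - E * Eᴴ := by
    simp only [E, conjTranspose_mul, conjTranspose_conjTranspose, conjTranspose_sub,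
      Matrix.mul_sub, Matrix.sub_mul]
    abel
  have hEE := (posSemidef_self_mul_conjTranspose E).hermForm_nonneg x
  have hcross : -‖star x ⬝ᵥ E *ᵥ (Aᴴ *ᵥ x)‖ ≤ hermForm (E * Aᴴ) x :=
    hermForm_mul_conjTranspose E A x ▸ neg_le_of_abs_le (Complex.abs_re_le_norm _)
  have hbound := h.norm_le x (Aᴴ *ᵥ x)
  have hcontr := hermForm_one_sub_conjTranspose_mul_mulVec_le A x
  rw [hsplit, hermForm_sub, hermForm_sub, hermForm_add, hermForm_conjTranspose]
  nlinarith

lemma hermForm_one_sub_conjTranspose_mul_le (hε : 0 ≤ ε) (h : IsNSVApprox ε A B) (y : β → ℂ) :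
    hermForm (1 - Bᴴ * B) y ≤ (1 + ε) * hermForm (1 - Aᴴ * A) y := by
  simpa using h.conjTranspose.hermForm_one_sub_mul_conjTranspose_le hε y

lemma mono (h : IsNSVApprox ε A B) (hεδ : ε ≤ δ) : IsNSVApprox δ A B := by
  refine of_norm_le h.1 h.2.1 fun x y => (h.norm_le x y).trans ?_
  have := add_nonneg (h.1.hermForm_nonneg x) (h.2.1.hermForm_nonneg y)
  gcongr

lemma trans (hε : 0 ≤ ε) (hδ : 0 ≤ δ) (hAB : IsNSVApprox ε A B) (hBC : IsNSVApprox δ B C) :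
    IsNSVApprox (ε + δ + ε * δ) A C := by
  refine of_norm_le hAB.1 hAB.2.1 fun x y => ?_
  have hsplit : star x ⬝ᵥ (C - A) *ᵥ y = star x ⬝ᵥ (C - B) *ᵥ y + star x ⬝ᵥ (B - A) *ᵥ y := by
    rw [← dotProduct_add, ← add_mulVec, sub_add_sub_cancel]
  have hL := hAB.hermForm_one_sub_mul_conjTranspose_le hε x
  have hR := hAB.hermForm_one_sub_conjTranspose_mul_le hε y
  have hABxy := hAB.norm_le x y
  have hBCxy := hBC.norm_le x y
  have hqA := add_nonneg (hAB.1.hermForm_nonneg x) (hAB.2.1.hermForm_nonneg y)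
  rw [hsplit]
  refine (norm_add_le _ _).trans ?_
  nlinarith

lemma of_chain {ℓ : ℕ} (hℓ : ℓ ≠ 0) {s : ℝ} (hs : 0 ≤ s) {B : Fin (ℓ + 1) → Matrix α β ℂ}
    (hB : ∀ i : Fin ℓ, IsNSVApprox s (B i.castSucc) (B i.succ)) :
    IsNSVApprox ((1 + s) ^ ℓ - 1) (B 0) (B (Fin.last ℓ)) := by
  suffices ∀ i : Fin (ℓ + 1), IsNSVApprox ((1 + s) ^ (i : ℕ) - 1) (B 0) (B i) by
    simpa using this (Fin.last ℓ)
  intro i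
  induction i using Fin.induction with
  | zero => simpa using (hB ⟨0, Nat.pos_of_ne_zero hℓ⟩).zero_self
  | succ i ih =>
    have hpow : 0 ≤ (1 + s) ^ (i : ℕ) - 1 := sub_nonneg.mpr (one_le_pow₀ (by linarith))
    convert ih.trans hpow hs (hB i) using 1
    simp only [Fin.val_succ]
    ring

end IsNSVApprox

lemma one_add_pow_le_one_add_two_mul {s : ℝ} (hs : 0 ≤ s) {k : ℕ} (hk : 2 * k * s ≤ 1) :
    (1 + s) ^ k ≤ 1 + 2 * k * s := by
  induction k with
  | zero => simp
  | succ k ih =>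
    push_cast at hk ⊢
    calc (1 + s) ^ (k + 1) = (1 + s) ^ k * (1 + s) := pow_succ _ _
      _ ≤ (1 + 2 * k * s) * (1 + s) := by gcongr; exact ih (by linarith)
      _ ≤ 1 + 2 * (k + 1) * s := by nlinarith

/-- normalized-SV approximation satisfies an approximate triangle inequality,
and consequently a chain of `ℓ` many `(δ/(2ℓ))`-approximations yields a
`δ`-approximation. -/
theorem stmt_17 {m n : ℕ} :
    (∀ (A₁ A₂ A₃ : Matrix (Fin m) (Fin n) ℂ) (δ ε : ℝ), 0 ≤ δ → 0 ≤ ε →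
      IsNSVApprox δ A₂ A₃ → IsNSVApprox ε A₁ A₂ →
      IsNSVApprox (ε + δ + ε * δ) A₁ A₃) ∧
    (∀ δ : ℝ, 0 < δ → δ < 1 / 2 →
      ∀ ℓ : ℕ, 1 ≤ ℓ →
      ∀ B : Fin (ℓ + 1) → Matrix (Fin m) (Fin n) ℂ,
        (∀ i : Fin ℓ, IsNSVApprox (δ / (2 * ℓ)) (B i.castSucc) (B i.succ)) →
        IsNSVApprox δ (B 0) (B (Fin.last ℓ))) := by
  refine ⟨fun A₁ A₂ A₃ δ ε hδ hε h23 h12 => h12.trans hε hδ h23,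
    fun δ hδ hδ_lt ℓ hℓ B hB => ?_⟩
  have hℓ_pos : (0 : ℝ) < ℓ := by exact_mod_cast hℓ
  have hsum : 2 * ℓ * (δ / (2 * ℓ)) = δ := by field_simp
  have hpow := one_add_pow_le_one_add_two_mul (s := δ / (2 * ℓ)) (k := ℓ) (by positivity)
    (by linarith)
  exact (IsNSVApprox.of_chain (by omega) (by positivity) hB).mono (by linarith)
end

section
/- Let V be a nonempty finite set, U ≥ 1 a real number, and A ∈ ℝ^{V×V} a matrix with every entry either 0 or lying in the interval [1, U]. Suppose A is strongly connected in the sense that for all i, j ∈ V there exists k ≥ 1 with (A^k)_{ij} > 0. Let d_i := ∑_j A_{ij} (so d_i > 0 for all i), and define the column-stochastic random-walk matrix W ∈ ℝ^{V×V} by W_{ji} := A_{ij}/d_i. Let π ∈ ℝ^V satisfy π_v > 0 for all v, ∑_v π_v = 1, and W·π = π, and let π_min := min_v π_v. Then for every ℓ ∈ ℕ and all subsets S, T ⊆ V with ∑_{v∈S} π_v + ∑_{v∈T} π_v ≥ 1, the quantity c := ∑_{j∈T} (W^ℓ · p)_j, where p ∈ ℝ^V is defined by p_v = π_v for v ∈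 S and p_v = 0 otherwise, satisfies either c = 0 or c ≥ (π_min/(2U))³. -/
/-!
Let `ρₜ = Wᵗ p` be the mass after `t` steps and `hₛ(u)` the probability that an `s`-step walk
from `u` ends in `T`. For every `t ≤ ℓ` we have `c = ∑ᵤ ρₜ(u) h_{ℓ-t}(u)`, and, because
`vol S + vol T ≥ 1`, also `∑ᵤ (π(u) - ρₜ(u)) (1 - h_{ℓ-t}(u)) ≤ c`; all terms are nonnegative.
If `c ≠ 0` there is a walk `v₀ ∈ S, …, v_ℓ ∈ T` along edges of weight at least `δ = 1 / (U |V|)`.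
If moreover `c < δ π_min / 4`, induction along the walk gives `ρₜ(vₜ) > π(vₜ) / 2`: the last edge
brings at least `δ π_min / 2 > 2c` of mass to `vₜ`, so the first relation forces
`h_{ℓ-t}(vₜ) ≤ 1/2`, and then the second one gives `π(vₜ) - ρₜ(vₜ) ≤ 2c < ρₜ(vₜ)`.
At `t = ℓ` this contradicts `ρ_ℓ(v_ℓ) ≤ c`. Finally `δ π_min / 4 ≥ (π_min / (2U))³`
because `π_min |V| ≤ 1`.
-/

open Matrix Finset

theorem Matrix.exists_path_of_pow_apply_ne_zero {V R : Type*} [Fintype V] [DecidableEq V]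
    [Semiring R] (M : Matrix V V R) {m : ℕ} {i j : V} (h : (M ^ m) j i ≠ 0) :
    ∃ v : ℕ → V, v 0 = i ∧ v m = j ∧ ∀ t < m, M (v (t + 1)) (v t) ≠ 0 := by
  induction m generalizing i with
  | zero =>
    obtain rfl : j = i := by_contra fun hji => h (by simp [one_apply_ne hji])
    exact ⟨fun _ => j, rfl, rfl, fun t ht => absurd ht t.not_lt_zero⟩
  | succ m ih =>
    rw [pow_succ, mul_apply] at h
    obtain ⟨w, -, hw⟩ := exists_ne_zero_of_sum_ne_zero h
    obtain ⟨v, rfl, hvm, hv⟩ := ih (left_ne_zero_of_mul hw)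
    refine ⟨fun | 0 => i | t + 1 => v t, rfl, hvm, ?_⟩
    rintro (_ | t) ht
    · exact right_ne_zero_of_mul hw
    · exact hv t (by omega)

theorem Matrix.sum_mulVec_apply {V R : Type*} [Fintype V] [CommSemiring R] (M : Matrix V V R)
    (x : V → R) (T : Finset V) :
    ∑ j ∈ T, (M *ᵥ x) j = ∑ u, x u * ∑ j ∈ T, M j u := by
  simp only [mulVec, dotProduct, mul_sum]
  rw [sum_comm]
  simp only [mul_comm]

section ColStochastic

variable {V : Type*} [Fintype V] [DecidableEq V] {M : Matrix V V ℝ} {μ : V → ℝ}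

theorem mulVec_le_of_le_of_mulVec_eq (hM : M ∈ colStochastic ℝ V) (hμ : M *ᵥ μ = μ)
    {x : V → ℝ} (hx : x ≤ μ) : M *ᵥ x ≤ μ := by
  intro u
  rw [← hμ]
  exact sum_le_sum fun w _ => mul_le_mul_of_nonneg_left (hx w) (hM.1 u w)

theorem pow_mulVec_eq_of_mulVec_eq (hμ : M *ᵥ μ = μ) (t : ℕ) : (M ^ t) *ᵥ μ = μ := by
  induction t with
  | zero => rw [pow_zero, one_mulVec]
  | succ t ih => rw [pow_succ', ← mulVec_mulVec, ih, hμ]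

theorem mul_sum_le_sum_mulVec (hM : M ∈ colStochastic ℝ V) {x : V → ℝ} (hx : 0 ≤ x)
    (T : Finset V) (u : V) :
    x u * ∑ j ∈ T, M j u ≤ ∑ j ∈ T, (M *ᵥ x) j := by
  rw [sum_mulVec_apply]
  exact single_le_sum (f := fun u => x u * ∑ j ∈ T, M j u)
    (fun w _ => mul_nonneg (hx w) (sum_nonneg fun j _ => hM.1 j w)) (mem_univ u)

theorem sub_mul_one_sub_sum_le_sum_mulVec (hM : M ∈ colStochastic ℝ V) (hμ : M *ᵥ μ = μ)
    (hμ1 : ∑ v, μ v = 1) {x : V → ℝ} (hxμ : x ≤ μ) {T : Finset V}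
    (hvol : 1 ≤ ∑ v, x v + ∑ v ∈ T, μ v) (u : V) :
    (μ u - x u) * (1 - ∑ j ∈ T, M j u) ≤ ∑ j ∈ T, (M *ᵥ x) j := by
  have hcol : ∀ w, ∑ j ∈ T, M j w ≤ 1 := fun w =>
    (sum_le_sum_of_subset_of_nonneg (subset_univ T) fun j _ _ => hM.1 j w).trans_eq
      (sum_col_of_mem_colStochastic hM w)
  have htotal : ∑ w, (μ w - x w) * (1 - ∑ j ∈ T, M j w)
      = 1 - ∑ j ∈ T, (M *ᵥ μ) j - ∑ w, x w + ∑ j ∈ T, (M *ᵥ x) j := by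
    simp only [sum_mulVec_apply, sub_mul, mul_sub, mul_one, sum_sub_distrib, hμ1]
    ring
  rw [hμ] at htotal
  calc (μ u - x u) * (1 - ∑ j ∈ T, M j u)
      ≤ ∑ w, (μ w - x w) * (1 - ∑ j ∈ T, M j w) :=
        single_le_sum (f := fun w => (μ w - x w) * (1 - ∑ j ∈ T, M j w))
          (fun w _ => mul_nonneg (sub_nonneg.2 (hxμ w)) (sub_nonneg.2 (hcol w))) (mem_univ u)
    _ ≤ ∑ j ∈ T, (M *ᵥ x) j := by linarith

theorem half_lt_of_mul_le_of_sub_mul_one_sub_le {a h μ c : ℝ} (ha : 0 ≤ a)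
    (h₁ : a * h ≤ c) (h₂ : (μ - a) * (1 - h) ≤ c) (hca : 2 * c < a) : μ / 2 < a := by
  rcases lt_or_ge (1 / 2) h with hh | hh
  · nlinarith
  · rcases le_or_gt a μ with haμ | haμ
    · nlinarith
    · linarith

theorem half_lt_pow_mulVec_apply (hM : M ∈ colStochastic ℝ V) (hμ : M *ᵥ μ = μ)
    (hμ1 : ∑ v, μ v = 1) {p : V → ℝ} (hp0 : 0 ≤ p) (hpμ : p ≤ μ) {T : Finset V}
    (hvol : 1 ≤ ∑ v, p v + ∑ v ∈ T, μ v) {t ℓ : ℕ} (htℓ : t ≤ ℓ) {u : V}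
    (hc : 2 * ∑ j ∈ T, (M ^ ℓ *ᵥ p) j < (M ^ t *ᵥ p) u) :
    μ u / 2 < (M ^ t *ᵥ p) u := by
  have hMt := pow_mem hM t
  have hMs := pow_mem hM (ℓ - t)
  have hsplit : M ^ ℓ *ᵥ p = M ^ (ℓ - t) *ᵥ (M ^ t *ᵥ p) := by
    rw [mulVec_mulVec, ← pow_add, Nat.sub_add_cancel htℓ]
  have hx0 := nonneg_mulVec_of_mem_colStochastic hMt hp0
  have hxμ := mulVec_le_of_le_of_mulVec_eq hMt (pow_mulVec_eq_of_mulVec_eq hμ t) hpμ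
  rw [hsplit] at hc
  refine half_lt_of_mul_le_of_sub_mul_one_sub_le (hx0 u) (mul_sum_le_sum_mulVec hMs hx0 T u)
    (sub_mul_one_sub_sum_le_sum_mulVec hMs (pow_mulVec_eq_of_mulVec_eq hμ _) hμ1 hxμ ?_ u) hc
  rwa [sum_mulVec_of_mem_colStochastic hMt]

theorem half_lt_pow_mulVec_apply_of_path (hM : M ∈ colStochastic ℝ V) {δ m : ℝ}
    (hδ : ∀ i j, M i j ≠ 0 → δ ≤ M i j) (hμ : M *ᵥ μ = μ) (hμ1 : ∑ v, μ v = 1)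
    (hm : ∀ v, m ≤ μ v) (hm0 : 0 ≤ m) {p : V → ℝ} (hp0 : 0 ≤ p) (hpμ : p ≤ μ)
    {T : Finset V} (hvol : 1 ≤ ∑ v, p v + ∑ v ∈ T, μ v) {ℓ : ℕ}
    (hc : 4 * ∑ j ∈ T, (M ^ ℓ *ᵥ p) j < δ * m) {v : ℕ → V}
    (hv : ∀ t < ℓ, M (v (t + 1)) (v t) ≠ 0) (hv0 : μ (v 0) / 2 < p (v 0)) :
    ∀ t ≤ ℓ, μ (v t) / 2 < (M ^ t *ᵥ p) (v t) := by
  intro t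
  induction t with
  | zero => simpa using hv0
  | succ t ih =>
    intro ht
    have hρt := ih (by omega)
    have hedge := hv t ht
    have hρ0 := nonneg_mulVec_of_mem_colStochastic (pow_mem hM t) hp0
    have hstep : M (v (t + 1)) (v t) * (M ^ t *ᵥ p) (v t) ≤ (M ^ (t + 1) *ᵥ p) (v (t + 1)) := by
      rw [pow_succ', ← mulVec_mulVec]
      exact single_le_sum (f := fun u => M (v (t + 1)) u * (M ^ t *ᵥ p) u)
        (fun u _ => mul_nonneg (hM.1 _ _) (hρ0 u)) (mem_univ (v t))
    refine half_lt_pow_mulVec_apply hM hμ hμ1 hp0 hpμ hvol ht ?_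
    calc 2 * ∑ j ∈ T, (M ^ ℓ *ᵥ p) j < δ * (m / 2) := by linarith
      _ ≤ M (v (t + 1)) (v t) * (m / 2) := by gcongr; exact hδ _ _ hedge
      _ ≤ M (v (t + 1)) (v t) * (M ^ t *ᵥ p) (v t) := by
        gcongr
        · exact hM.1 _ _
        · linarith [hm (v t)]
      _ ≤ (M ^ (t + 1) *ᵥ p) (v (t + 1)) := hstep

theorem sum_pow_mulVec_restrict_eq_zero_or_le (hM : M ∈ colStochastic ℝ V) {δ m : ℝ}
    (hδ : ∀ i j, M i j ≠ 0 → δ ≤ M i j) (hδ1 : δ ≤ 1) (hμ : M *ᵥ μ = μ)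
    (hμ1 : ∑ v, μ v = 1) (hm : ∀ v, m ≤ μ v) (hm0 : 0 ≤ m) (ℓ : ℕ) (S T : Finset V)
    (hvol : 1 ≤ ∑ v ∈ S, μ v + ∑ v ∈ T, μ v) :
    (∑ j ∈ T, (M ^ ℓ *ᵥ fun v => if v ∈ S then μ v else 0) j) = 0 ∨
      δ * m / 4 ≤ ∑ j ∈ T, (M ^ ℓ *ᵥ fun v => if v ∈ S then μ v else 0) j := by
  set p : V → ℝ := fun v => if v ∈ S then μ v else 0
  set c := ∑ j ∈ T, (M ^ ℓ *ᵥ p) j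
  have hμ0 (v : V) : 0 ≤ μ v := hm0.trans (hm v)
  have hp0 : 0 ≤ p := fun v => by simp only [p]; split_ifs <;> simp [hμ0 v]
  have hpμ : p ≤ μ := fun v => by simp only [p]; split_ifs <;> simp [hμ0 v]
  have hvol' : 1 ≤ ∑ v, p v + ∑ v ∈ T, μ v := by rwa [sum_ite_mem, univ_inter]
  rcases eq_or_ne c 0 with hc0 | hc0
  · exact Or.inl hc0
  refine Or.inr (not_lt.1 fun hlt => ?_)
  obtain ⟨j, hjT, hj⟩ := exists_ne_zero_of_sum_ne_zero hc0
  obtain ⟨i, -, hi⟩ := exists_ne_zero_of_sum_ne_zero hj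
  have hpi := right_ne_zero_of_mul hi
  have hiS : i ∈ S := by_contra fun hiS => hpi (by simp [p, hiS])
  obtain ⟨v, rfl, rfl, hv⟩ := exists_path_of_pow_apply_ne_zero M (left_ne_zero_of_mul hi)
  have hv0 : μ (v 0) / 2 < p (v 0) := by
    simp only [p, if_pos hiS] at hpi ⊢
    linarith [lt_of_le_of_ne (hμ0 (v 0)) hpi.symm]
  have hhalf := half_lt_pow_mulVec_apply_of_path hM hδ hμ hμ1 hm hm0 hp0 hpμ hvol'
    (by linarith) hv hv0 ℓ le_rfl
  have hρc : (M ^ ℓ *ᵥ p) (v ℓ) ≤ c :=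
    single_le_sum (fun j _ => nonneg_mulVec_of_mem_colStochastic (pow_mem hM ℓ) hp0 j) hjT
  nlinarith [hm (v ℓ), mul_le_mul_of_nonneg_right hδ1 hm0]

end ColStochastic

section RandomWalk

variable {V : Type*} [Fintype V] {A : Matrix V V ℝ}

theorem sum_row_pos_of_pow_apply_ne_zero [DecidableEq V] (hA0 : ∀ i j, 0 ≤ A i j) {k : ℕ}
    (hk : 1 ≤ k) {i j : V} (h : (A ^ k) i j ≠ 0) : 0 < ∑ j, A i j := by
  obtain ⟨k, rfl⟩ := Nat.exists_eq_add_of_le' hk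
  rw [pow_succ', mul_apply] at h
  obtain ⟨w, -, hw⟩ := exists_ne_zero_of_sum_ne_zero h
  exact ((hA0 i w).lt_of_ne (left_ne_zero_of_mul hw).symm).trans_le
    (single_le_sum (fun j _ => hA0 i j) (mem_univ w))

theorem mem_colStochastic_of_apply_eq_div [DecidableEq V] (hA0 : ∀ i j, 0 ≤ A i j) {d : V → ℝ}
    (hd : ∀ i, d i = ∑ j, A i j) (hd0 : ∀ i, 0 < d i) {W : Matrix V V ℝ}
    (hW : ∀ i j, W j i = A i j / d i) : W ∈ colStochastic ℝ V := by
  refine mem_colStochastic_iff_sum.2 ⟨fun j i => ?_, fun i => ?_⟩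
  · rw [hW]
    exact div_nonneg (hA0 i j) (hd0 i).le
  · simp only [hW, ← sum_div, ← hd, div_self (hd0 i).ne']

theorem inv_mul_card_le_of_apply_ne_zero {U : ℝ} (hU : 0 ≤ U)
    (hA : ∀ i j, A i j = 0 ∨ (1 ≤ A i j ∧ A i j ≤ U))
    {d : V → ℝ} (hd : ∀ i, d i = ∑ j, A i j) (hd0 : ∀ i, 0 < d i) {W : Matrix V V ℝ}
    (hW : ∀ i j, W j i = A i j / d i) {i j : V} (hWji : W j i ≠ 0) :
    1 / (U * Fintype.card V) ≤ W j i := by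
  have hdU : d i ≤ U * Fintype.card V := by
    rw [hd, mul_comm, ← nsmul_eq_mul, ← card_univ]
    refine sum_le_card_nsmul _ _ _ fun j _ => ?_
    rcases hA i j with h | h
    · exact h ▸ hU
    · exact h.2
  rw [hW] at hWji ⊢
  have hAij : 1 ≤ A i j := ((hA i j).resolve_left (left_ne_zero_of_mul hWji)).1
  exact div_le_div₀ (by linarith) hAij (hd0 i) hdU

end RandomWalk

theorem div_two_mul_pow_three_le {π U N : ℝ} (hπ : 0 < π) (hπN : π * N ≤ 1) (hU : 1 ≤ U)
    (hN : 1 ≤ N) :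
    (π / (2 * U)) ^ 3 ≤ 1 / (U * N) * π / 4 := by
  have hπ1 : π ≤ 1 := by nlinarith
  field_simp
  nlinarith [mul_le_mul_of_nonneg_left hπN hπ.le]

/-- for the random walk on a strongly connected weighted digraph with
weights in `{0} ∪ [1,U]`, the stationary probability mass that an `ℓ`-step walk starts
in `S` and ends in `T` (when `vol(S) + vol(T) ≥ 1`) is either `0` or at least
`(π_min/(2U))³`. -/
theorem stmt_19 {V : Type*} [Fintype V] [DecidableEq V] [Nonempty V]
    (U : ℝ) (hU : 1 ≤ U)
    (A : Matrix V V ℝ)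
    (hA : ∀ i j, A i j = 0 ∨ (1 ≤ A i j ∧ A i j ≤ U))
    (hconn : ∀ i j, ∃ k : ℕ, 1 ≤ k ∧ 0 < (A ^ k) i j)
    (d : V → ℝ) (hd : ∀ i, d i = ∑ j, A i j)
    (W : Matrix V V ℝ) (hW : ∀ i j, W j i = A i j / d i)
    (μ : V → ℝ) (hμpos : ∀ v, 0 < μ v) (hμsum : ∑ v, μ v = 1)
    (hstat : W.mulVec μ = μ)
    (ℓ : ℕ) (S T : Finset V)
    (hvol : 1 ≤ (∑ v ∈ S, μ v) + ∑ v ∈ T, μ v) :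
    (∑ j ∈ T, ((W ^ ℓ).mulVec fun v => if v ∈ S then μ v else 0) j) = 0 ∨
    ((Finset.univ.inf' Finset.univ_nonempty μ) / (2 * U)) ^ 3 ≤
      ∑ j ∈ T, ((W ^ ℓ).mulVec fun v => if v ∈ S then μ v else 0) j := by
  set πmin := univ.inf' univ_nonempty μ
  have hA0 (i j : V) : 0 ≤ A i j := by rcases hA i j with h | h <;> linarith
  have hd0 (i : V) : 0 < d i := by
    obtain ⟨k, hk, hAk⟩ := hconn i i
    exact hd i ▸ sum_row_pos_of_pow_apply_ne_zero hA0 hk hAk.ne'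
  have hπmin (v : V) : πmin ≤ μ v := inf'_le μ (mem_univ v)
  have hπmin0 : 0 < πmin := (lt_inf'_iff _).2 fun v _ => hμpos v
  have hπminN : πmin * Fintype.card V ≤ 1 := by
    rw [← hμsum, mul_comm, ← nsmul_eq_mul, ← card_univ]
    exact card_nsmul_le_sum _ _ _ fun v _ => hπmin v
  have hN : (1 : ℝ) ≤ Fintype.card V := by exact_mod_cast Fintype.card_pos
  refine (sum_pow_mulVec_restrict_eq_zero_or_le (mem_colStochastic_of_apply_eq_div hA0 hd hd0 hW)
    (fun _ _ => inv_mul_card_le_of_apply_ne_zero (by linarith) hA hd hd0 hW) ?_ hstat hμsum hπmin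
    hπmin0.le ℓ S T hvol).imp_right (div_two_mul_pow_three_le hπmin0 hπminN hU hN).trans
  exact div_le_one_of_le₀ (by nlinarith) (by positivity)
end
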